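/- arXiv:0812.0601 — 5 statements merged into one kernel-verified Lean document; each statement's English description precedes it below -/
import Mathlib

section
/- For an n×n matrix X of indeterminates (or over any commutative ring) and any subset I of {1,...,n} with |I| = d ≥ 1, the cycle-sum C_I satisfies C_I = Σ (-1)^{k+d} (k-1)! P_{I_1}···P_{I_k}, where the sum is over all set partitions I = I_1 ⊔ ... ⊔ I_k and P_J denotes the principal minor of X indexed by J. -/
attribute [local instance] Classical.propDecidable

/-- The principal minor of `X` with rows and columns indexed by `I`. -/
noncomputable def principalMinor {n : ℕ} {R : Type*} [CommRing R]
    (X : Matrix (Fin n) (Fin n) R) (I : Finset (Fin n)) : R :=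
  (X.submatrix (fun i : {x // x ∈ I} => (i : Fin n))
    (fun j : {x // x ∈ I} => (j : Fin n))).det

/-- The cycle-sum `C_I`: sum over all cyclic permutations with support exactly `I`
of the monomial `∏_{i ∈ I} x_{i, π i}`; equals `1` for `I = ∅` and `x_{ii}` for `I = {i}`. -/
noncomputable def cycleSum {n : ℕ} {R : Type*} [CommRing R]
    (X : Matrix (Fin n) (Fin n) R) (I : Finset (Fin n)) : R :=
  if I.card ≤ 1 then ∏ i ∈ I, X i i
  else ∑ π ∈ Finset.univ.filter
      (fun π : Equiv.Perm (Fin n) => π.IsCycle ∧ π.support = I),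
    ∏ i ∈ I, X i (π i)

/-- `P` is a set partition of the finite set `I` into (nonempty, pairwise disjoint) blocks. -/
def IsSetPartition {n : ℕ} (I : Finset (Fin n)) (P : Finset (Finset (Fin n))) : Prop :=
  (∀ B ∈ P, B.Nonempty) ∧ (∀ B ∈ P, ∀ B' ∈ P, B ≠ B' → Disjoint B B') ∧ P.sup id = I

/-!
Expanding each principal minor as a signed sum over the permutations supported in its block turns
`∏_{B ∈ P} P_B` into the signed sum over the permutations `σ` supported in `I` that preserve every
block of `P`. Exchanging the two sums, each such `σ` receives the weight
`(-1)^(|I|+1) ∑ (-1)^(|P|-1) (|P|-1)!` over the partitions `P` of `I` into `σ`-invariant blocks,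
i.e. over the coarsenings `P ≥ Q` of the partition `Q` of `I` into `σ`-orbits. As
`(-1)^(|P|-1) (|P|-1)! = μ(P, 1̂)` in the partition lattice, the sum vanishes unless `Q = 1̂`, i.e.
unless `σ` has a single orbit on `I`. Directly: splitting off one orbit `O`, a partition either has
`O` as a block or adds `O` to one of the `k` blocks of a partition of `I \ O`, and
`(-1)^k k! + k (-1)^(k-1) (k-1)! = 0` for `k ≥ 1`. The surviving permutations are the cycles with
support `I`, whose sign `(-1)^(|I|+1)` cancels the prefactor.
-/

open Equiv Equiv.Perm Finset

section Perm

variable {α : Type*} {σ τ π : Perm α} {B I : Finset α} {a x y : α}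

theorem mem_of_sameCycle (hB : ∀ z, σ z ∈ B ↔ z ∈ B) (h : σ.SameCycle x y) (hx : x ∈ B) :
    y ∈ B := by
  obtain ⟨k, rfl⟩ := h
  simpa using ((σ.subtypePerm hB ^ k) ⟨x, hx⟩).2

theorem isCycleOn_iff_forall_sameCycle (hI : ∀ z, σ z ∈ I ↔ z ∈ I) (ha : a ∈ I) :
    σ.IsCycleOn I ↔ ∀ x ∈ I, σ.SameCycle a x :=
  ⟨fun h x hx => h.2 ha hx, fun h => ⟨σ.bijOn (by simpa using hI),
    fun x hx y hy => (h x hx).symm.trans (h y hy)⟩⟩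

variable [DecidableEq α]

theorem ofSubtype_subtypePerm_inv_mul_apply (h : ∀ x, π x ∈ B ↔ x ∈ B) (x : α) :
    ((ofSubtype (π.subtypePerm h))⁻¹ * π) x = if x ∈ B then x else π x := by
  rw [Perm.mul_apply, inv_eq_iff_eq]
  split_ifs with hx
  · exact (ofSubtype_subtypePerm_of_mem h hx).symm
  · exact (ofSubtype_subtypePerm_of_not_mem h (mt (h x).1 hx)).symm

variable [Fintype α]

theorem isCycle_and_support_eq_iff (hI : I.Nontrivial) :
    σ.IsCycle ∧ σ.support = I ↔ σ.support ⊆ I ∧ σ.IsCycleOn I := by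
  constructor
  · rintro ⟨hσ, rfl⟩
    exact ⟨subset_rfl, by simpa [coe_support_eq_set_support] using hσ.isCycleOn⟩
  · rintro ⟨hsub, hcyc⟩
    have hI_sub : I ⊆ σ.support := fun x hx => mem_support.2 (hcyc.apply_ne hI hx)
    refine ⟨isCycle_iff_exists_isCycleOn.2 ⟨I, hI, hcyc, fun x hx => ?_⟩,
      subset_antisymm hsub hI_sub⟩
    exact mem_coe.2 (hsub (mem_support.2 hx))

theorem eq_one_of_support_subset_singleton (h : σ.support ⊆ {a}) : σ = 1 := by
  have := σ.card_support_ne_one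
  have := card_le_card h
  rw [← support_eq_empty_iff, ← card_eq_zero]
  simp only [card_singleton] at *
  omega

theorem sign_eq_of_isCycleOn (hsub : σ.support ⊆ I) (hcyc : σ.IsCycleOn I) (hI : I.Nonempty) :
    sign σ = (-1) ^ (#I + 1) := by
  obtain ⟨a, rfl⟩ | hI := hI.exists_eq_singleton_or_nontrivial
  · simp [eq_one_of_support_subset_singleton hsub]
  · obtain ⟨hσ, hsupp⟩ := (isCycle_and_support_eq_iff hI).2 ⟨hsub, hcyc⟩
    rw [hσ.sign, hsupp, pow_succ]
    simp

theorem apply_mem_iff_of_disjoint_support (h : Disjoint σ.support B) (x : α) :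
    σ x ∈ B ↔ x ∈ B := by
  simpa using (isInvariant_of_support_le (subset_compl_iff_disjoint_right.2 h) x).not

theorem support_ofSubtype_subtypePerm_subset (h : ∀ x, π x ∈ B ↔ x ∈ B) :
    (ofSubtype (π.subtypePerm h)).support ⊆ B := fun x hx => by
  by_contra hxB
  exact mem_support.1 hx (ofSubtype_subtypePerm_of_not_mem h hxB)

theorem support_ofSubtype_subtypePerm_inv_mul_subset (h : ∀ x, π x ∈ B ↔ x ∈ B)
    (hπ : π.support ⊆ I) : ((ofSubtype (π.subtypePerm h))⁻¹ * π).support ⊆ I \ B := fun x hx => by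
  rw [mem_support, ofSubtype_subtypePerm_inv_mul_apply] at hx
  split_ifs at hx with hxB
  · exact absurd rfl hx
  · exact mem_sdiff.2 ⟨hπ (mem_support.2 hx), hxB⟩

theorem ofSubtype_subtypePerm_mul_eq (hτ : τ.support ⊆ B) (hσ : Disjoint σ.support B)
    (h : ∀ x, (τ * σ) x ∈ B ↔ x ∈ B) : ofSubtype ((τ * σ).subtypePerm h) = τ := by
  ext x
  by_cases hxB : x ∈ B
  · rw [ofSubtype_subtypePerm_of_mem _ hxB, Perm.mul_apply,
      notMem_support.1 fun hx => disjoint_left.1 hσ hx hxB]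
  · rw [ofSubtype_subtypePerm_of_not_mem _ hxB, notMem_support.1 fun hx => hxB (hτ hx)]

end Perm

section Blocks

variable {α : Type*}

def PreservesBlocks (σ : Perm α) (P : Finset (Finset α)) : Prop :=
  ∀ B ∈ P, ∀ x, σ x ∈ B ↔ x ∈ B

theorem preservesBlocks_insert [DecidableEq α] {σ : Perm α} {B : Finset α}
    {P : Finset (Finset α)} :
    PreservesBlocks σ (insert B P) ↔ (∀ x, σ x ∈ B ↔ x ∈ B) ∧ PreservesBlocks σ P :=
  forall_mem_insert _ _ _

theorem PreservesBlocks.mono {σ : Perm α} {P Q : Finset (Finset α)} (hP : PreservesBlocks σ P)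
    (hQ : Q ⊆ P) : PreservesBlocks σ Q :=
  fun B hB => hP B (hQ hB)

theorem PreservesBlocks.inv_mul_ofSubtype_subtypePerm [DecidableEq α] {π : Perm α}
    {P : Finset (Finset α)} {B : Finset α} (h : ∀ x, π x ∈ B ↔ x ∈ B) (hπ : PreservesBlocks π P) :
    PreservesBlocks ((ofSubtype (π.subtypePerm h))⁻¹ * π) P := fun C hC x => by
  rw [ofSubtype_subtypePerm_inv_mul_apply]
  split_ifs
  exacts [Iff.rfl, hπ C hC x]

variable [Fintype α] {σ : Perm α} {a x : α} {B : Finset α}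

noncomputable def cycleClass (σ : Perm α) (a : α) : Finset α :=
  {x | σ.SameCycle a x}

@[simp]
theorem mem_cycleClass : x ∈ cycleClass σ a ↔ σ.SameCycle a x := by
  simp [cycleClass]

theorem self_mem_cycleClass : a ∈ cycleClass σ a :=
  mem_cycleClass.2 (SameCycle.refl σ a)

theorem apply_mem_cycleClass_iff : σ x ∈ cycleClass σ a ↔ x ∈ cycleClass σ a := by
  simp [sameCycle_apply_right]

theorem cycleClass_subset (hB : ∀ z, σ z ∈ B ↔ z ∈ B) (hxB : x ∈ B) (hx : x ∈ cycleClass σ a) :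
    cycleClass σ a ⊆ B := fun _ hy =>
  mem_of_sameCycle hB ((mem_cycleClass.1 hx).symm.trans (mem_cycleClass.1 hy)) hxB

end Blocks

namespace IsSetPartition

variable {n : ℕ} {I B C : Finset (Fin n)} {P : Finset (Finset (Fin n))} {x : Fin n}

theorem subset (hP : IsSetPartition I P) (hB : B ∈ P) : B ⊆ I :=
  hP.2.2 ▸ le_sup (f := id) hB

theorem exists_mem (hP : IsSetPartition I P) (hx : x ∈ I) : ∃ B ∈ P, x ∈ B := by
  rw [← hP.2.2] at hx
  simpa using hx

theorem eq_of_mem (hP : IsSetPartition I P) (hB : B ∈ P) (hC : C ∈ P) (hxB : x ∈ B)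
    (hxC : x ∈ C) : B = C := by
  by_contra hne
  exact disjoint_left.1 (hP.2.1 B hB C hC hne) hxB hxC

theorem nonempty (hP : IsSetPartition I P) (hI : I.Nonempty) : P.Nonempty := by
  obtain ⟨x, hx⟩ := hI
  obtain ⟨B, hB, -⟩ := hP.exists_mem hx
  exact ⟨B, hB⟩

theorem empty_iff : IsSetPartition I ∅ ↔ I = ∅ := by
  simp [IsSetPartition, eq_comm]

theorem erase (hP : IsSetPartition I P) (hB : B ∈ P) : IsSetPartition (I \ B) (P.erase B) := by
  refine ⟨fun C hC => hP.1 C (mem_of_mem_erase hC),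
    fun C hC D hD => hP.2.1 C (mem_of_mem_erase hC) D (mem_of_mem_erase hD), ?_⟩
  have hdisj : Disjoint B ((P.erase B).sup id) := Finset.disjoint_sup_right.2 fun C hC =>
    hP.2.1 B hB C (mem_of_mem_erase hC) (ne_of_mem_erase hC).symm
  rw [← hP.2.2, ← insert_erase hB, sup_insert, erase_insert (notMem_erase B P)]
  exact (union_sdiff_cancel_left hdisj).symm

theorem insert (hP : IsSetPartition I P) (hB : B.Nonempty) (hBI : Disjoint B I) :
    IsSetPartition (B ∪ I) (insert B P) := by
  have hdisj : ∀ C ∈ P, Disjoint B C := fun C hC => hBI.mono_right (hP.subset hC)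
  refine ⟨?_, ?_, by rw [sup_insert, hP.2.2]; rfl⟩
  · simpa [hB] using hP.1
  · simp only [mem_insert, forall_eq_or_imp]
    refine ⟨⟨fun h => absurd rfl h, fun C hC _ => hdisj C hC⟩,
      fun C hC => ⟨fun hne => (hdisj C hC).symm, hP.2.1 C hC⟩⟩

end IsSetPartition

variable {n : ℕ}

noncomputable def invariantPartitions (σ : Perm (Fin n)) (I : Finset (Fin n)) :
    Finset (Finset (Finset (Fin n))) :=
  {P | IsSetPartition I P ∧ PreservesBlocks σ P}

section Recursion

variable {σ : Perm (Fin n)} {I C : Finset (Fin n)} {a : Fin n} {P Q : Finset (Finset (Fin n))}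

theorem mem_invariantPartitions :
    P ∈ invariantPartitions σ I ↔ IsSetPartition I P ∧ PreservesBlocks σ P := by
  simp [invariantPartitions]

theorem disjoint_cycleClass_of_mem (hP : P ∈ invariantPartitions σ (I \ cycleClass σ a))
    (hC : C ∈ P) : Disjoint C (cycleClass σ a) :=
  disjoint_of_subset_left ((mem_invariantPartitions.1 hP).1.subset hC) sdiff_disjoint

theorem notMem_of_mem_invariantPartitions_sdiff
    (hP : P ∈ invariantPartitions σ (I \ cycleClass σ a)) (hC : C ∈ P) : a ∉ C :=
  fun haC => disjoint_left.1 (disjoint_cycleClass_of_mem hP hC) haC self_mem_cycleClass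

theorem insert_union_erase_mem_invariantPartitions (hI : ∀ z, σ z ∈ I ↔ z ∈ I) (ha : a ∈ I)
    (hP : P ∈ invariantPartitions σ (I \ cycleClass σ a)) (hC : C ∈ P) :
    insert (C ∪ cycleClass σ a) (P.erase C) ∈ invariantPartitions σ I := by
  obtain ⟨hpart, hpres⟩ := mem_invariantPartitions.1 hP
  rw [mem_invariantPartitions, preservesBlocks_insert]
  refine ⟨?_, fun x => by simp only [mem_union, hpres C hC x, apply_mem_cycleClass_iff],
    hpres.mono (erase_subset _ _)⟩
  have hdisj : Disjoint (C ∪ cycleClass σ a) ((I \ cycleClass σ a) \ C) :=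
    disjoint_union_left.2 ⟨disjoint_sdiff, disjoint_sdiff.mono_right sdiff_subset⟩
  convert (hpart.erase hC).insert ⟨a, mem_union_right _ self_mem_cycleClass⟩ hdisj using 1
  have hCI := hpart.subset hC
  have hOI := cycleClass_subset hI ha self_mem_cycleClass
  grind

theorem cycleClass_notMem_insert_union_erase
    (hP : P ∈ invariantPartitions σ (I \ cycleClass σ a)) (hC : C ∈ P) :
    cycleClass σ a ∉ insert (C ∪ cycleClass σ a) (P.erase C) := by
  obtain ⟨c, hc⟩ := (mem_invariantPartitions.1 hP).1.1 C hC
  rw [mem_insert, not_or]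
  refine ⟨fun h => disjoint_left.1 (disjoint_cycleClass_of_mem hP hC) hc ?_, fun h =>
    notMem_of_mem_invariantPartitions_sdiff hP (mem_of_mem_erase h) self_mem_cycleClass⟩
  exact h ▸ mem_union_left _ hc

theorem union_cycleClass_notMem_erase (hP : P ∈ invariantPartitions σ (I \ cycleClass σ a))
    (D : Finset (Fin n)) : D ∪ cycleClass σ a ∉ P.erase C := fun h =>
  notMem_of_mem_invariantPartitions_sdiff hP (mem_of_mem_erase h)
    (mem_union_right _ self_mem_cycleClass)

theorem eq_of_insert_union_erase_eq {P₁ P₂ : Finset (Finset (Fin n))} {C₁ C₂ : Finset (Fin n)}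
    (hP₁ : P₁ ∈ invariantPartitions σ (I \ cycleClass σ a)) (hC₁ : C₁ ∈ P₁)
    (hP₂ : P₂ ∈ invariantPartitions σ (I \ cycleClass σ a)) (hC₂ : C₂ ∈ P₂)
    (h : insert (C₁ ∪ cycleClass σ a) (P₁.erase C₁) =
      insert (C₂ ∪ cycleClass σ a) (P₂.erase C₂)) :
    P₁ = P₂ ∧ C₁ = C₂ := by
  have hunion : C₁ ∪ cycleClass σ a = C₂ ∪ cycleClass σ a :=
    (mem_insert.1 (h ▸ mem_insert_self _ _ :
      C₁ ∪ cycleClass σ a ∈ insert (C₂ ∪ cycleClass σ a) (P₂.erase C₂))).resolve_right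
      (union_cycleClass_notMem_erase hP₂ _)
  obtain rfl : C₁ = C₂ := by
    rw [← union_sdiff_cancel_right (disjoint_cycleClass_of_mem hP₁ hC₁), hunion,
      union_sdiff_cancel_right (disjoint_cycleClass_of_mem hP₂ hC₂)]
  have herase : P₁.erase C₁ = P₂.erase C₁ := by
    simpa [erase_insert (union_cycleClass_notMem_erase hP₁ _),
      erase_insert (union_cycleClass_notMem_erase hP₂ _)] using
      congrArg (fun Q => Q.erase (C₁ ∪ cycleClass σ a)) h
  exact ⟨by rw [← insert_erase hC₁, herase, insert_erase hC₂], rfl⟩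

theorem exists_insert_union_erase_eq (hQ : Q ∈ invariantPartitions σ I) (ha : a ∈ I)
    (hOQ : cycleClass σ a ∉ Q) :
    ∃ P ∈ invariantPartitions σ (I \ cycleClass σ a), ∃ C ∈ P,
      insert (C ∪ cycleClass σ a) (P.erase C) = Q := by
  obtain ⟨hpart, hpres⟩ := mem_invariantPartitions.1 hQ
  obtain ⟨B, hB, haB⟩ := hpart.exists_mem ha
  have hOB : cycleClass σ a ⊆ B := cycleClass_subset (hpres B hB) haB self_mem_cycleClass
  have hCne : (B \ cycleClass σ a).Nonempty :=
    sdiff_nonempty.2 fun hBO => hOQ (subset_antisymm hBO hOB ▸ hB)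
  have hC_notMem : B \ cycleClass σ a ∉ Q.erase B := fun h => by
    obtain ⟨c, hc⟩ := hCne
    exact ne_of_mem_erase h (hpart.eq_of_mem (mem_of_mem_erase h) hB hc (sdiff_subset hc))
  refine ⟨insert (B \ cycleClass σ a) (Q.erase B), ?_, B \ cycleClass σ a, mem_insert_self _ _,
    by rw [erase_insert hC_notMem, sdiff_union_of_subset hOB, insert_erase hB]⟩
  rw [mem_invariantPartitions, preservesBlocks_insert]
  refine ⟨?_, fun x => by simp only [mem_sdiff, hpres B hB x, apply_mem_cycleClass_iff],
    hpres.mono (erase_subset _ _)⟩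
  convert (hpart.erase hB).insert hCne (disjoint_sdiff.mono_left sdiff_subset) using 1
  have hBI := hpart.subset hB
  grind

variable {M : Type*} [AddCommMonoid M] (g : ℕ → M)

theorem sum_invariantPartitions_filter_mem (hI : ∀ z, σ z ∈ I ↔ z ∈ I) (ha : a ∈ I) :
    ∑ P ∈ invariantPartitions σ I with cycleClass σ a ∈ P, g #P =
      ∑ P ∈ invariantPartitions σ (I \ cycleClass σ a), g (#P + 1) := by
  refine sum_nbij' (fun P => P.erase (cycleClass σ a)) (fun P => insert (cycleClass σ a) P)
    (fun P hP => ?_) (fun P hP => ?_) (fun P hP => insert_erase (mem_filter.1 hP).2)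
    (fun P hP => erase_insert fun hO =>
      notMem_of_mem_invariantPartitions_sdiff hP hO self_mem_cycleClass)
    (fun P hP => by rw [card_erase_add_one (mem_filter.1 hP).2])
  · rw [mem_filter, mem_invariantPartitions] at hP
    exact mem_invariantPartitions.2 ⟨hP.1.1.erase hP.2, hP.1.2.mono (erase_subset _ _)⟩
  · rw [mem_invariantPartitions] at hP
    rw [mem_filter, mem_invariantPartitions, preservesBlocks_insert]
    refine ⟨⟨?_, fun _ => apply_mem_cycleClass_iff, hP.2⟩, mem_insert_self _ _⟩
    rw [← union_sdiff_of_subset (cycleClass_subset hI ha self_mem_cycleClass)]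
    exact hP.1.insert ⟨a, self_mem_cycleClass⟩ disjoint_sdiff

theorem sum_invariantPartitions_filter_notMem (hI : ∀ z, σ z ∈ I ↔ z ∈ I) (ha : a ∈ I) :
    ∑ P ∈ invariantPartitions σ I with cycleClass σ a ∉ P, g #P =
      ∑ P ∈ invariantPartitions σ (I \ cycleClass σ a), #P • g #P := by
  calc _ = ∑ x ∈ (invariantPartitions σ (I \ cycleClass σ a)).sigma id, g #x.1 := by
        refine (sum_bij (fun x _ => insert (x.2 ∪ cycleClass σ a) (x.1.erase x.2))
          (fun x hx => ?_) (fun x hx y hy h => ?_) (fun Q hQ => ?_) (fun x hx => ?_)).symm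
        · obtain ⟨hP, hC : x.2 ∈ x.1⟩ := mem_sigma.1 hx
          exact mem_filter.2 ⟨insert_union_erase_mem_invariantPartitions hI ha hP hC,
            cycleClass_notMem_insert_union_erase hP hC⟩
        · obtain ⟨hP₁, hC₁ : x.2 ∈ x.1⟩ := mem_sigma.1 hx
          obtain ⟨hP₂, hC₂ : y.2 ∈ y.1⟩ := mem_sigma.1 hy
          obtain ⟨h₁, h₂⟩ := eq_of_insert_union_erase_eq hP₁ hC₁ hP₂ hC₂ h
          exact Sigma.ext h₁ (heq_of_eq h₂)
        · obtain ⟨P, hP, C, hC, rfl⟩ :=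
            exists_insert_union_erase_eq (mem_filter.1 hQ).1 ha (mem_filter.1 hQ).2
          exact ⟨⟨P, C⟩, mem_sigma.2 ⟨hP, hC⟩, rfl⟩
        · obtain ⟨hP, hC : x.2 ∈ x.1⟩ := mem_sigma.1 hx
          rw [card_insert_of_notMem (union_cycleClass_notMem_erase hP _), card_erase_add_one hC]
    _ = _ := by simp [sum_sigma]

theorem sum_invariantPartitions_eq (hI : ∀ z, σ z ∈ I ↔ z ∈ I) (ha : a ∈ I) :
    ∑ P ∈ invariantPartitions σ I, g #P =
      ∑ P ∈ invariantPartitions σ (I \ cycleClass σ a), (g (#P + 1) + #P • g #P) := by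
  rw [← sum_filter_add_sum_filter_not _ (cycleClass σ a ∈ ·),
    sum_invariantPartitions_filter_mem g hI ha, sum_invariantPartitions_filter_notMem g hI ha,
    sum_add_distrib]

end Recursion

section Weights

variable {R : Type*} [CommRing R] {σ : Perm (Fin n)} {I : Finset (Fin n)}

theorem neg_one_pow_mul_factorial_succ_add_nsmul (k : ℕ) :
    (-1 : R) ^ (k + 1 - 1) * (k + 1 - 1).factorial + k • ((-1) ^ (k - 1) * (k - 1).factorial) =
      if k = 0 then 1 else 0 := by
  rcases k with _ | k
  · simp
  · simp only [Nat.add_sub_cancel, nsmul_eq_mul, Nat.factorial_succ, pow_succ]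
    push_cast
    ring

theorem sum_invariantPartitions_neg_one_pow_mul_factorial (hI : ∀ z, σ z ∈ I ↔ z ∈ I)
    (hne : I.Nonempty) :
    ∑ P ∈ invariantPartitions σ I, (-1 : R) ^ (#P - 1) * (#P - 1).factorial =
      if σ.IsCycleOn I then 1 else 0 := by
  obtain ⟨a, ha⟩ := hne
  have hpres : PreservesBlocks σ ∅ := fun B hB => absurd hB (notMem_empty B)
  rw [sum_invariantPartitions_eq (fun k => (-1 : R) ^ (k - 1) * (k - 1).factorial) hI ha]
  simp only [neg_one_pow_mul_factorial_succ_add_nsmul, card_eq_zero, sum_ite_eq',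
    mem_invariantPartitions, IsSetPartition.empty_iff, sdiff_eq_empty_iff_subset, hpres, and_true,
    isCycleOn_iff_forall_sameCycle hI ha, subset_iff, mem_cycleClass]

theorem sum_invariantPartitions_eq_sign (hσ : σ.support ⊆ I) (hne : I.Nonempty) :
    ∑ P ∈ invariantPartitions σ I, (-1 : R) ^ (#P + #I) * (#P - 1).factorial =
      if σ.IsCycleOn I then (sign σ : R) else 0 := by
  have hI := isInvariant_of_support_le hσ
  calc _ = ∑ P ∈ invariantPartitions σ I,
        (-1 : R) ^ (#I + 1) * ((-1) ^ (#P - 1) * (#P - 1).factorial) := by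
        refine sum_congr rfl fun P hP => ?_
        have := card_pos.2 ((mem_invariantPartitions.1 hP).1.nonempty hne)
        rw [← mul_assoc, ← pow_add]
        congr 2
        omega
    _ = _ := by
        rw [← mul_sum, sum_invariantPartitions_neg_one_pow_mul_factorial hI hne]
        split_ifs with hcyc
        · simp [sign_eq_of_isCycleOn hσ hcyc hne]
        · simp

end Weights

section Minors

variable {R : Type*} [CommRing R] (X : Matrix (Fin n) (Fin n) R)

theorem principalMinor_eq_sum (B : Finset (Fin n)) :
    principalMinor X B =
      ∑ σ ∈ {σ : Perm (Fin n) | σ.support ⊆ B}, sign σ * ∏ i ∈ B, X i (σ i) := by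
  rw [principalMinor, ← Matrix.det_transpose, Matrix.det_apply',
    sum_subtype _ (p := fun σ : Perm (Fin n) => ∀ x, x ∉ B → σ x = x) fun σ => ?_]
  · refine Fintype.sum_equiv (Perm.subtypeEquivSubtypePerm _) _ _ fun τ => ?_
    simp [sign_ofSubtype, ← prod_attach B fun i => X i (ofSubtype τ i)]
  · simp [subset_iff, not_imp_comm]

variable {I B : Finset (Fin n)} {P : Finset (Finset (Fin n))}

theorem prod_mul_apply_eq_prod_mul_prod {τ σ : Perm (Fin n)} (hBI : B ⊆ I) (hτ : τ.support ⊆ B)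
    (hσ : σ.support ⊆ I \ B) :
    ∏ i ∈ I, X i ((τ * σ) i) = (∏ i ∈ B, X i (τ i)) * ∏ i ∈ I \ B, X i (σ i) := by
  have hB : ∏ i ∈ B, X i ((τ * σ) i) = ∏ i ∈ B, X i (τ i) :=
    prod_congr rfl fun i hi => by
      rw [Perm.mul_apply, notMem_support.1 fun h => (mem_sdiff.1 (hσ h)).2 hi]
  have hIB : ∏ i ∈ I \ B, X i ((τ * σ) i) = ∏ i ∈ I \ B, X i (σ i) :=
    prod_congr rfl fun i hi => by
      rw [Perm.mul_apply, notMem_support.1 fun h =>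
        (mem_sdiff.1 ((isInvariant_of_support_le hσ i).2 hi)).2 (hτ h)]
  rw [← prod_sdiff hBI, hB, hIB, mul_comm]

theorem sum_support_subset_mul_sum (hBI : B ⊆ I) (hP : IsSetPartition (I \ B) P) :
    (∑ τ ∈ {τ : Perm (Fin n) | τ.support ⊆ B}, sign τ * ∏ i ∈ B, X i (τ i)) *
        ∑ σ ∈ {σ : Perm (Fin n) | σ.support ⊆ I \ B ∧ PreservesBlocks σ P},
          sign σ * ∏ i ∈ I \ B, X i (σ i) =
      ∑ π ∈ {π : Perm (Fin n) | π.support ⊆ I ∧ PreservesBlocks π (insert B P)},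
        sign π * ∏ i ∈ I, X i (π i) := by
  have hB {π : Perm (Fin n)} (hπ : PreservesBlocks π (insert B P)) : ∀ x, π x ∈ B ↔ x ∈ B :=
    hπ B (mem_insert_self B P)
  have hdisj {C : Finset (Fin n)} (hC : C ⊆ I \ B) : Disjoint C B :=
    disjoint_of_subset_left hC sdiff_disjoint
  rw [sum_mul_sum, ← sum_product']
  refine sum_bij' (fun x _ => x.1 * x.2)
    (fun π hπ => (ofSubtype (π.subtypePerm (hB (mem_filter.1 hπ).2.2)),
      (ofSubtype (π.subtypePerm (hB (mem_filter.1 hπ).2.2)))⁻¹ * π))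
    (fun x hx => ?_) (fun π hπ => ?_) (fun x hx => ?_) (fun π _ => mul_inv_cancel_left _ _)
    (fun x hx => ?_)
  · simp only [mem_product, mem_filter, mem_univ, true_and] at hx ⊢
    obtain ⟨hτ, hσ, hσP⟩ := hx
    refine ⟨(support_mul_le _ _).trans (union_subset (hτ.trans hBI) (hσ.trans sdiff_subset)),
      preservesBlocks_insert.2 ⟨fun y => ?_, fun C hC y => ?_⟩⟩
    · rw [Perm.mul_apply, isInvariant_of_support_le hτ,
        apply_mem_iff_of_disjoint_support (hdisj hσ)]
    · rw [Perm.mul_apply, apply_mem_iff_of_disjoint_support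
        (disjoint_of_subset_left hτ (hdisj (hP.subset hC)).symm), hσP C hC]
  · simp only [mem_product, mem_filter, mem_univ, true_and] at hπ ⊢
    exact ⟨support_ofSubtype_subtypePerm_subset _,
      support_ofSubtype_subtypePerm_inv_mul_subset _ hπ.1,
      hπ.2.inv_mul_ofSubtype_subtypePerm _ |>.mono (subset_insert B P)⟩
  · simp only [mem_product, mem_filter, mem_univ, true_and] at hx
    obtain ⟨hτ, hσ, -⟩ := hx
    simp only [ofSubtype_subtypePerm_mul_eq hτ (hdisj hσ), inv_mul_cancel_left]
  · simp only [mem_product, mem_filter, mem_univ, true_and] at hx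
    rw [prod_mul_apply_eq_prod_mul_prod X hBI hx.1 hx.2.1, Perm.sign_mul]
    push_cast
    ring

theorem prod_principalMinor_eq_sum (hP : IsSetPartition I P) :
    ∏ B ∈ P, principalMinor X B =
      ∑ σ ∈ {σ : Perm (Fin n) | σ.support ⊆ I ∧ PreservesBlocks σ P},
        sign σ * ∏ i ∈ I, X i (σ i) := by
  induction P using Finset.induction_on generalizing I with
  | empty =>
    obtain rfl : I = ∅ := IsSetPartition.empty_iff.1 hP
    have : ({σ : Perm (Fin n) | σ.support ⊆ ∅ ∧ PreservesBlocks σ ∅} : Finset _) = {1} := by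
      ext σ
      simp [PreservesBlocks, support_eq_empty_iff]
    rw [prod_empty, this, sum_singleton]
    simp
  | insert B P hB ih =>
    have hP' : IsSetPartition (I \ B) P := by
      simpa [erase_insert hB] using hP.erase (mem_insert_self B P)
    rw [prod_insert hB, principalMinor_eq_sum, ih hP',
      sum_support_subset_mul_sum X (hP.subset (mem_insert_self B P)) hP']

theorem sum_isSetPartition_mul_prod_principalMinor (f : ℕ → R) :
    ∑ P ∈ {P : Finset (Finset (Fin n)) | IsSetPartition I P}, f #P * ∏ B ∈ P, principalMinor X B =
      ∑ σ ∈ {σ : Perm (Fin n) | σ.support ⊆ I},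
        (∑ P ∈ invariantPartitions σ I, f #P) * (sign σ * ∏ i ∈ I, X i (σ i)) := by
  calc _ = ∑ P ∈ {P : Finset (Finset (Fin n)) | IsSetPartition I P},
        ∑ σ ∈ {σ : Perm (Fin n) | σ.support ⊆ I ∧ PreservesBlocks σ P},
          f #P * (sign σ * ∏ i ∈ I, X i (σ i)) :=
        sum_congr rfl fun P hP => by rw [prod_principalMinor_eq_sum X (mem_filter.1 hP).2, mul_sum]
    _ = _ := by
        simp_rw [sum_mul]
        exact sum_comm' fun P σ => by simp [mem_invariantPartitions]; tauto

end Minors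

theorem cycleSum_eq_sum_isCycleOn {R : Type*} [CommRing R] (X : Matrix (Fin n) (Fin n) R)
    {I : Finset (Fin n)} (hI : I.Nonempty) :
    cycleSum X I =
      ∑ σ ∈ {σ : Perm (Fin n) | σ.support ⊆ I ∧ σ.IsCycleOn I}, ∏ i ∈ I, X i (σ i) := by
  obtain ⟨a, rfl⟩ | hI := hI.exists_eq_singleton_or_nontrivial
  · have : ({σ : Perm (Fin n) | σ.support ⊆ {a} ∧ σ.IsCycleOn ({a} : Finset (Fin n))} :
        Finset _) = {1} := by
      ext σ
      simp only [mem_filter, mem_univ, true_and, mem_singleton]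
      exact ⟨fun h => eq_one_of_support_subset_singleton h.1, by rintro rfl; simp⟩
    rw [cycleSum, if_pos (card_singleton a).le, this, sum_singleton]
    simp
  · rw [cycleSum, if_neg (one_lt_card_iff_nontrivial.2 hI).not_ge]
    exact sum_congr (filter_congr fun σ _ => isCycle_and_support_eq_iff hI) fun _ _ => rfl

theorem cycleSum_eq_principal_minor_sum {n : ℕ} {R : Type*} [CommRing R]
    (X : Matrix (Fin n) (Fin n) R) (I : Finset (Fin n)) (hI : 1 ≤ I.card) :
    cycleSum X I =
      ∑ P ∈ Finset.univ.filter
          (fun P : Finset (Finset (Fin n)) => IsSetPartition I P),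
        (-1 : R) ^ (P.card + I.card) * (P.card - 1).factorial *
          ∏ B ∈ P, principalMinor X B := by
  have hne : I.Nonempty := card_pos.1 hI
  rw [sum_isSetPartition_mul_prod_principalMinor X fun k => (-1 : R) ^ (k + #I) * (k - 1).factorial,
    cycleSum_eq_sum_isCycleOn X hne, ← filter_filter, sum_filter]
  refine sum_congr rfl fun σ hσ => ?_
  rw [sum_invariantPartitions_eq_sign (mem_filter.1 hσ).2 hne]
  split_ifs
  · rw [← mul_assoc, ← Int.cast_mul, ← Units.val_mul, Int.units_mul_self, Units.val_one,
      Int.cast_one, one_mul]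
  · rw [zero_mul]
end

section
/- Let π_1, π_2 be two distinct cyclic permutations of {1,...,k} with full support, k ≥ 3. Then the multiset union of the directed edge-sets {(i, π_1(i))} ∪ {(i, π_2(i))} (a directed multigraph on k vertices with 2k edges) can be decomposed into a disjoint union of directed cycles each of length strictly less than k. -/
/-- The multiset of directed edges `i → σ i` over the support of a permutation `σ`. -/
def edgeMultiset {k : ℕ} (σ : Equiv.Perm (Fin k)) : Multiset (Fin k × Fin k) :=
  σ.support.val.map (fun i => (i, σ i))

/-!
Pick `a` with `π₁ a ≠ π₂ a` and exchange the edges out of `a`: the maps `f₁ = π₁[a ↦ π₂ a]` and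
`f₂ = π₂[a ↦ π₁ a]` have together the same edges as `π₁` and `π₂`. Following `f₁` from `a` closes
a cycle that misses `π₁ a`, the one vertex without an `f₁`-preimage; likewise for `f₂`. Removing
these two short cycles, both through `a`, leaves a multigraph with in-degree equal to out-degree
everywhere and no edge out of `a`, so it splits into cycles avoiding `a`.
-/

open Equiv Equiv.Perm Set

namespace Function

theorem exists_iterate_mem_periodicPts {α : Type*} [Finite α] (f : α → α) (x : α) :
    ∃ n, f^[n] x ∈ periodicPts f := by
  obtain ⟨m, n, hmn, heq⟩ := Finite.exists_ne_map_eq_of_infinite (f^[·] x)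
  wlog hlt : m < n generalizing m n
  · exact this n m hmn.symm heq.symm (by omega)
  refine ⟨m, mk_mem_periodicPts (n := n - m) (by omega) ?_⟩
  rw [IsPeriodicPt, IsFixedPt, ← iterate_add_apply, Nat.sub_add_cancel hlt.le]
  exact heq.symm

end Function

open Function (update update_of_ne update_self update_eq_self periodicPts bijOn_periodicPts
  exists_iterate_mem_periodicPts)

/-- `f` permutes its periodic points in `s`; any cycle of that permutation will do. -/
theorem Equiv.Perm.exists_isCycle_of_mapsTo {α : Type*} [Fintype α] [DecidableEq α]
    {f : α → α} {s : Set α} (hs : MapsTo f s s) (hf : ∀ x ∈ s, f x ≠ x) (hne : s.Nonempty) :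
    ∃ c : Perm α, c.IsCycle ∧ ∀ x ∈ c.support, x ∈ s ∧ c x = f x := by
  classical
  obtain ⟨x, hx⟩ := hne
  obtain ⟨n, hn⟩ := exists_iterate_mem_periodicPts f x
  set t := s ∩ periodicPts f
  have hp : f^[n] x ∈ t := ⟨hs.iterate n hx, hn⟩
  have hbij : BijOn f t t :=
    ((toFinite t).injOn_iff_bijOn_of_mapsTo (hs.inter_inter (bijOn_periodicPts f).mapsTo)).1
      ((bijOn_periodicPts f).injOn.mono inter_subset_right)
  set g := ofSubtype (hbij.equiv f)
  have hg : ∀ y ∈ t, g y = f y := fun y hy => ofSubtype_apply_of_mem _ hy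
  have hgt : ∀ y ∈ g.support, y ∈ t := by
    intro y hy
    by_contra h
    exact mem_support.1 hy (ofSubtype_apply_of_not_mem _ h)
  have hgp : g (f^[n] x) ≠ f^[n] x := by
    rw [hg _ hp]
    exact hf _ hp.1
  refine ⟨g.cycleOf (f^[n] x), isCycle_cycleOf _ hgp, fun y hy => ?_⟩
  have hyt := hgt y (support_cycleOf_le _ _ hy)
  refine ⟨hyt.1, ?_⟩
  rw [← hg y hyt]
  exact (mem_cycleFactorsFinset_iff.1
    (cycleOf_mem_cycleFactorsFinset_iff.2 (mem_support.2 hgp))).2 y hy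

theorem Equiv.Perm.apply_ne_self_of_support_eq_univ {α : Type*} [Fintype α] [DecidableEq α]
    {σ : Perm α} (hs : σ.support = Finset.univ) (x : α) : σ x ≠ x :=
  mem_support.1 (hs ▸ Finset.mem_univ x)

section

variable {k : ℕ}

theorem Equiv.Perm.card_support_lt_of_notMem {σ : Perm (Fin k)} {x : Fin k}
    (hx : x ∉ σ.support) : σ.support.card < k := by
  simpa using Finset.card_lt_univ_of_notMem hx

def edgesOn (f : Fin k → Fin k) (s : Finset (Fin k)) : Multiset (Fin k × Fin k) :=
  s.val.map fun i => (i, f i)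

theorem map_fst_edgesOn (f : Fin k → Fin k) (s : Finset (Fin k)) :
    (edgesOn f s).map Prod.fst = s.val := by
  simp [edgesOn]

theorem edgesOn_add_edgesOn_compl (f : Fin k → Fin k) (s : Finset (Fin k)) :
    edgesOn f s + edgesOn f sᶜ = edgesOn f Finset.univ := by
  rw [edgesOn, edgesOn, ← Multiset.map_add, ← Finset.disjUnion_val _ _ disjoint_compl_right]
  simp [edgesOn]

theorem edgesOn_congr {f g : Fin k → Fin k} {s : Finset (Fin k)} (h : ∀ x ∈ s, f x = g x) :
    edgesOn f s = edgesOn g s :=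
  Multiset.map_congr rfl fun x hx => by rw [h x hx]

theorem edgesOn_univ_update (f : Fin k → Fin k) (a b : Fin k) :
    edgesOn (update f a b) Finset.univ = (a, b) ::ₘ edgesOn f {a}ᶜ := by
  rw [← edgesOn_add_edgesOn_compl _ {a}, edgesOn_congr (g := f) fun x hx =>
    update_of_ne (Finset.notMem_singleton.1 (Finset.mem_compl.1 hx)) _ _]
  simp [edgesOn]

theorem edgesOn_univ_update_add_update (f g : Fin k → Fin k) (a : Fin k) :
    edgesOn (update f a (g a)) Finset.univ + edgesOn (update g a (f a)) Finset.univ =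
      edgesOn f Finset.univ + edgesOn g Finset.univ := by
  conv_rhs => rw [← update_eq_self a f, ← update_eq_self a g]
  simp only [edgesOn_univ_update, Multiset.cons_add, Multiset.add_cons]
  exact Multiset.cons_swap _ _ _

theorem edgeMultiset_eq_edgesOn {c : Perm (Fin k)} {f : Fin k → Fin k}
    (h : ∀ x ∈ c.support, c x = f x) : edgeMultiset c = edgesOn f c.support :=
  edgesOn_congr h

theorem edgeMultiset_nodup (σ : Perm (Fin k)) : (edgeMultiset σ).Nodup :=
  σ.support.nodup.map fun _ _ h => congrArg Prod.fst h

theorem fst_ne_snd_of_mem_edgeMultiset {σ : Perm (Fin k)} {e : Fin k × Fin k}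
    (he : e ∈ edgeMultiset σ) : e.1 ≠ e.2 := by
  obtain ⟨i, hi, rfl⟩ := Multiset.mem_map.1 he
  exact (mem_support.1 hi).symm

theorem map_fst_edgeMultiset (σ : Perm (Fin k)) :
    (edgeMultiset σ).map Prod.fst = σ.support.val :=
  map_fst_edgesOn σ σ.support

theorem map_snd_edgeMultiset (σ : Perm (Fin k)) :
    (edgeMultiset σ).map Prod.snd = (edgeMultiset σ).map Prod.fst := by
  rw [map_fst_edgeMultiset, edgeMultiset, Multiset.map_map]
  conv_rhs => rw [← Finset.map_perm (σ := σ) (fun x hx => mem_support.2 hx)]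
  rfl

/-- The cycle of `update σ a b` through `a`; it misses `σ a`, which has no preimage. -/
theorem Equiv.Perm.IsCycle.exists_isCycle_update {σ : Perm (Fin k)} (hσ : σ.IsCycle)
    (hs : σ.support = Finset.univ) {a b : Fin k} (hba : b ≠ a) (hb : b ≠ σ a) :
    ∃ c : Perm (Fin k), c.IsCycle ∧ a ∈ c.support ∧ σ a ∉ c.support ∧
      ∀ x ∈ c.support, c x = update σ a b x := by
  have hnofix : ∀ x ∈ (univ : Set (Fin k)), update σ a b x ≠ x := by
    intro x _
    rcases eq_or_ne x a with rfl | hxa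
    · rwa [update_self]
    · rw [update_of_ne hxa]
      exact apply_ne_self_of_support_eq_univ hs x
  obtain ⟨c, hc, hcf⟩ := exists_isCycle_of_mapsTo (mapsTo_univ _ _) hnofix ⟨a, mem_univ a⟩
  have hσa : σ a ∉ c.support := by
    intro h
    obtain ⟨y, hcy⟩ := c.surjective (σ a)
    have hy : update σ a b y = σ a := by
      rw [← (hcf y (c.apply_mem_support.1 (hcy ▸ h))).2, hcy]
    rcases eq_or_ne y a with hya | hya
    · rw [hya, update_self] at hy
      exact hb hy
    · rw [update_of_ne hya] at hy
      exact hya (σ.injective hy)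
  refine ⟨c, hc, ?_, hσa, fun x hx => (hcf x hx).2⟩
  by_contra ha
  have hcσ : c = σ := hc.support_congr hσ (hs ▸ Finset.subset_univ _) fun x hx => by
    rw [(hcf x hx).2, update_of_ne (ne_of_mem_of_not_mem hx ha)]
  exact hσa (by rw [hcσ, hs]; exact Finset.mem_univ _)

theorem map_snd_eq_map_fst_of_add {D R : Multiset (Fin k × Fin k)}
    (hD : D.map Prod.snd = D.map Prod.fst) (h : (D + R).map Prod.snd = (D + R).map Prod.fst) :
    R.map Prod.snd = R.map Prod.fst := by
  simpa only [Multiset.map_add, hD, add_right_inj] using h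

theorem mem_map_fst_of_mem_support {σ : Perm (Fin k)} {E : Multiset (Fin k × Fin k)}
    (h : edgeMultiset σ ≤ E) {x : Fin k} (hx : x ∈ σ.support) : x ∈ E.map Prod.fst :=
  Multiset.mem_of_le (Multiset.map_le_map h) (by rwa [map_fst_edgeMultiset])

theorem exists_isCycle_edgeMultiset_le {E : Multiset (Fin k × Fin k)}
    (hloop : ∀ e ∈ E, e.1 ≠ e.2) (hbal : E.map Prod.snd = E.map Prod.fst) (hE : E ≠ 0) :
    ∃ c : Perm (Fin k), c.IsCycle ∧ edgeMultiset c ≤ E := by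
  have hsucc : ∀ v, ∃ w, v ∈ E.map Prod.fst → (v, w) ∈ E := by
    intro v
    by_cases hv : v ∈ E.map Prod.fst
    · obtain ⟨e, he, rfl⟩ := Multiset.mem_map.1 hv
      exact ⟨e.2, fun _ => he⟩
    · exact ⟨v, fun h => absurd h hv⟩
  choose f hf using hsucc
  have hmaps : MapsTo f {v | v ∈ E.map Prod.fst} {v | v ∈ E.map Prod.fst} := fun v hv => by
    change f v ∈ E.map Prod.fst
    rw [← hbal]
    exact Multiset.mem_map_of_mem Prod.snd (hf v hv)
  obtain ⟨e, he⟩ := Multiset.exists_mem_of_ne_zero hE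
  obtain ⟨c, hc, hcf⟩ := exists_isCycle_of_mapsTo hmaps (fun v hv => (hloop _ (hf v hv)).symm)
    ⟨e.1, Multiset.mem_map_of_mem _ he⟩
  refine ⟨c, hc, (Multiset.le_iff_subset (edgeMultiset_nodup c)).2 fun e he => ?_⟩
  obtain ⟨v, hv, rfl⟩ := Multiset.mem_map.1 he
  rw [(hcf v hv).2]
  exact hf v (hcf v hv).1

theorem exists_isCycle_decomposition (E : Multiset (Fin k × Fin k))
    (hloop : ∀ e ∈ E, e.1 ≠ e.2) (hbal : E.map Prod.snd = E.map Prod.fst) :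
    ∃ L : List (Perm (Fin k)), (∀ σ ∈ L, σ.IsCycle) ∧ (L.map edgeMultiset).sum = E := by
  induction E using Multiset.strongInductionOn with
  | ih E ih =>
  rcases eq_or_ne E 0 with rfl | hE
  · exact ⟨[], by simp, rfl⟩
  obtain ⟨c, hc, hle⟩ := exists_isCycle_edgeMultiset_le hloop hbal hE
  obtain ⟨R, rfl⟩ := Multiset.le_iff_exists_add.1 hle
  have hR : R < edgeMultiset c + R := by
    refine lt_add_of_pos_left R (pos_iff_ne_zero.2 ?_)
    simpa [edgeMultiset] using hc.nonempty_support.ne_empty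
  obtain ⟨L, hL, hsum⟩ := ih R hR (fun e he => hloop e (Multiset.mem_add.2 (Or.inr he)))
    (map_snd_eq_map_fst_of_add (map_snd_edgeMultiset c) hbal)
  refine ⟨c :: L, ?_, by rw [List.map_cons, List.sum_cons, hsum]⟩
  simpa [hc] using hL

end

theorem union_of_two_cycles_decomposes_general {k : ℕ}
    (π₁ π₂ : Equiv.Perm (Fin k)) (h₁ : π₁.IsCycle) (h₂ : π₂.IsCycle)
    (hs₁ : π₁.support = Finset.univ) (hs₂ : π₂.support = Finset.univ)
    (hne : π₁ ≠ π₂) :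
    ∃ L : List (Equiv.Perm (Fin k)),
      (∀ σ ∈ L, σ.IsCycle ∧ σ.support.card < k) ∧
      (L.map edgeMultiset).sum = edgeMultiset π₁ + edgeMultiset π₂ := by
  obtain ⟨a, ha⟩ : ∃ a, π₁ a ≠ π₂ a := not_forall.1 fun h => hne (Equiv.ext h)
  obtain ⟨c₁, hc₁, ha₁, hσa₁, hcf₁⟩ :=
    h₁.exists_isCycle_update hs₁ (apply_ne_self_of_support_eq_univ hs₂ a) (Ne.symm ha)
  obtain ⟨c₂, hc₂, ha₂, hσa₂, hcf₂⟩ :=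
    h₂.exists_isCycle_update hs₂ (apply_ne_self_of_support_eq_univ hs₁ a) ha
  set R := edgesOn (update π₁ a (π₂ a)) c₁.supportᶜ + edgesOn (update π₂ a (π₁ a)) c₂.supportᶜ
  have hE : edgeMultiset π₁ + edgeMultiset π₂ = (edgeMultiset c₁ + edgeMultiset c₂) + R := by
    rw [edgeMultiset_eq_edgesOn hcf₁, edgeMultiset_eq_edgesOn hcf₂, add_add_add_comm,
      edgesOn_add_edgesOn_compl, edgesOn_add_edgesOn_compl, edgesOn_univ_update_add_update,
      edgeMultiset, edgeMultiset, hs₁, hs₂]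
    rfl
  obtain ⟨L, hL, hsum⟩ := exists_isCycle_decomposition R
    (fun e he => by
      rcases Multiset.mem_add.1 (hE ▸ Multiset.mem_add.2 (Or.inr he)) with h | h <;>
        exact fst_ne_snd_of_mem_edgeMultiset h)
    (map_snd_eq_map_fst_of_add (D := edgeMultiset c₁ + edgeMultiset c₂)
      (by simp only [Multiset.map_add, map_snd_edgeMultiset])
      (by simp only [← hE, Multiset.map_add, map_snd_edgeMultiset]))
  refine ⟨c₁ :: c₂ :: L, ?_, by simp [hsum, hE, add_assoc]⟩
  simp only [List.mem_cons, forall_eq_or_imp]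
  refine ⟨⟨hc₁, card_support_lt_of_notMem hσa₁⟩, ⟨hc₂, card_support_lt_of_notMem hσa₂⟩,
    fun σ hσ => ⟨hL σ hσ, card_support_lt_of_notMem (x := a) fun h => ?_⟩⟩
  -- `R` has no edge out of `a`, and every vertex of `σ` has one in `R`.
  have := mem_map_fst_of_mem_support (hsum ▸ List.le_sum_of_mem (List.mem_map_of_mem hσ)) h
  simp [R, Multiset.map_add, map_fst_edgesOn, ha₁, ha₂] at this

/-- The union of the edge multigraphs of two distinct full-support cycles on `k ≥ 3`
vertices decomposes into directed cycles, each of length strictly less than `k`. -/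
theorem union_of_two_cycles_decomposes {k : ℕ} (hk : 3 ≤ k)
    (π₁ π₂ : Equiv.Perm (Fin k)) (h₁ : π₁.IsCycle) (h₂ : π₂.IsCycle)
    (hs₁ : π₁.support = Finset.univ) (hs₂ : π₂.support = Finset.univ)
    (hne : π₁ ≠ π₂) :
    ∃ L : List (Equiv.Perm (Fin k)),
      (∀ σ ∈ L, σ.IsCycle ∧ σ.support.card < k) ∧
      (L.map edgeMultiset).sum = edgeMultiset π₁ + edgeMultiset π₂ :=
  union_of_two_cycles_decomposes_general π₁ π₂ h₁ h₂ hs₁ hs₂ hne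
end

section
/- Let γ : ℂ^{n²} → ℂ^M be the monomial map whose coordinates are the cycle monomials c_π = Π_{i: π(i)≠i} x_{i,π(i)} over all cyclic permutations π of subsets of {1,...,n} (M being the number of such cycles). Then the image of γ is a Zariski-closed subset of ℂ^M. -/
/-!
Conjugating `X` by a positive diagonal matrix does not change its cycle monomials. If all of
them have modulus at most `R ≥ 1`, the weights `log ‖X i j‖ - log R` have nonpositive sum along
every cycle of the support graph of `X`, so they admit a potential `w` with
`log ‖X i j‖ - log R + w j ≤ w i`: take `w i` to be the largest weight of a simple path starting
at `i` (a path that would return to `i` closes a cycle, which can be cut off). Rescaling by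
`exp w` yields a matrix with the same cycle monomials and all entries of modulus at most `R`.
So near any point of its closure the image agrees with the image of a compact set.
-/

open Equiv Finset

namespace List

variable {α M : Type*}

def walkWeight [Add M] [Zero M] (d : α → α → M) (l : List α) : M :=
  (zipWith d l l.tail).sum

section AddMonoid

variable [AddMonoid M] (d : α → α → M)

@[simp]
lemma walkWeight_singleton (a : α) : walkWeight d [a] = 0 := rfl

@[simp]
lemma walkWeight_cons_cons (a b : α) (l : List α) :
    walkWeight d (a :: b :: l) = d a b + walkWeight d (b :: l) := by
  simp [walkWeight]

lemma walkWeight_append_cons (l₁ l₂ : List α) (a : α) :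
    walkWeight d (l₁ ++ a :: l₂) = walkWeight d (l₁ ++ [a]) + walkWeight d (a :: l₂) := by
  induction l₁ with
  | nil => simp
  | cons x t ih =>
    cases t with
    | nil => simp
    | cons y t => simp only [cons_append, walkWeight_cons_cons] at ih ⊢; rw [ih, add_assoc]

end AddMonoid

lemma rotate_cons_one (a : α) (l : List α) : (a :: l).rotate 1 = l ++ [a] := by
  simp [rotate_cons_succ]

variable [DecidableEq α] {a : α} {l : List α}

lemma map_formPerm_eq_rotate_one (hl : l.Nodup) : l.map l.formPerm = l.rotate 1 := by
  refine ext_getElem (by simp) fun i h _ => ?_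
  simp only [getElem_map, formPerm_apply_getElem _ hl, getElem_rotate]

lemma forall_mem_rel_formPerm_of_isChain {S : α → α → Prop} (hl : (a :: l).Nodup)
    (hS : IsChain S (a :: l ++ [a])) : ∀ k ∈ a :: l, S k ((a :: l).formPerm k) := by
  rwa [isChain_cons_append_singleton_iff_forall₂, ← rotate_cons_one,
    ← map_formPerm_eq_rotate_one hl, forall₂_map_right_iff, forall₂_same] at hS

lemma sum_support_formPerm_eq_walkWeight [Fintype α] [AddCommMonoid M] (d : α → α → M)
    (hl : (a :: l).Nodup) (hne : l ≠ []) :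
    ∑ k ∈ (a :: l).formPerm.support, d k ((a :: l).formPerm k) =
      walkWeight d (a :: l ++ [a]) := by
  have hmap : (a :: l).map (fun k => d k ((a :: l).formPerm k)) =
      zipWith d (a :: l) (l ++ [a]) := by
    rw [← rotate_cons_one, ← map_formPerm_eq_rotate_one hl, zipWith_map_right, zipWith_self]
  have htrunc : zipWith d (a :: l ++ [a]) (l ++ [a]) = zipWith d (a :: l) (l ++ [a]) := by
    simpa using zipWith_append (f := d) (l₁ := a :: l) (l₁' := [a]) (l₂' := []) (by simp)
  rw [support_formPerm_of_nodup _ hl (by simpa using hne), sum_toFinset _ hl, hmap, walkWeight,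
    cons_append, tail_cons, ← cons_append, htrunc]

end List

section Potential

variable {α : Type*} {S : α → α → Prop} {d : α → α → ℝ}

def simplePathsFrom (S : α → α → Prop) (i : α) : Set (List α) :=
  {l | l.Nodup ∧ l.IsChain S ∧ l.head? = some i}

lemma singleton_mem_simplePathsFrom (i : α) : [i] ∈ simplePathsFrom S i :=
  ⟨List.nodup_singleton i, List.isChain_singleton i, rfl⟩

lemma finite_simplePathsFrom [Finite α] (i : α) : (simplePathsFrom S i).Finite := by
  have := Fintype.ofFinite α
  exact (List.finite_length_le α (Fintype.card α)).subset fun l hl => hl.1.length_le_card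

variable [Fintype α] [DecidableEq α]

def CycleSumsNonpos (S : α → α → Prop) (d : α → α → ℝ) : Prop :=
  ∀ σ : Perm α, σ.IsCycle → (∀ k ∈ σ.support, S k (σ k)) → ∑ k ∈ σ.support, d k (σ k) ≤ 0

lemma walkWeight_cons_append_singleton_nonpos
    (hcyc : CycleSumsNonpos S d) {a : α} {l : List α} (hl : (a :: l).Nodup) (hne : l ≠ [])
    (hS : (a :: l ++ [a]).IsChain S) :
    List.walkWeight d (a :: l ++ [a]) ≤ 0 := by
  rw [← List.sum_support_formPerm_eq_walkWeight d hl hne]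
  refine hcyc _ (List.isCycle_formPerm hl (by simpa [Nat.one_le_iff_ne_zero] using hne))
    fun k hk => ?_
  exact List.forall_mem_rel_formPerm_of_isChain hl hS k
    (List.mem_of_formPerm_apply_ne (Perm.mem_support.1 hk))

lemma exists_mem_simplePathsFrom_add_walkWeight_le (hirr : ∀ i, ¬ S i i)
    (hcyc : CycleSumsNonpos S d) {i j : α} (hij : S i j) {l : List α}
    (hl : l ∈ simplePathsFrom S j) :
    ∃ l' ∈ simplePathsFrom S i, d i j + List.walkWeight d l ≤ List.walkWeight d l' := by
  obtain ⟨hnd, hch, hhead⟩ := hl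
  by_cases hi : i ∈ l
  · -- `i` closes the simple cycle `i → j → ⋯ → i`, whose weight is nonpositive: cut it off.
    obtain ⟨P, Q, rfl⟩ := List.append_of_mem hi
    obtain ⟨P, rfl⟩ : ∃ P', P = j :: P' := by
      rcases P with _ | ⟨j', P'⟩
      · exact absurd ((by simpa using hhead : i = j) ▸ hij) (hirr i)
      · exact ⟨P', by simpa using hhead⟩
    rw [List.nodup_middle] at hnd
    rw [List.isChain_split] at hch
    have hcycle := walkWeight_cons_append_singleton_nonpos hcyc (l := j :: P)
      (hnd.sublist ((List.sublist_append_left _ _).cons_cons i)) (List.cons_ne_nil _ _)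
      (by simpa [List.isChain_cons_cons] using ⟨hij, hch.1⟩)
    refine ⟨i :: Q, ⟨hnd.sublist ((List.sublist_append_right _ _).cons_cons i), hch.2, rfl⟩,
      ?_⟩
    rw [List.walkWeight_append_cons]
    simp only [List.cons_append, List.walkWeight_cons_cons] at hcycle ⊢
    linarith
  · obtain ⟨t, rfl⟩ : ∃ t, l = j :: t := ⟨_, List.eq_cons_of_mem_head? hhead⟩
    exact ⟨i :: j :: t, ⟨List.nodup_cons.2 ⟨hi, hnd⟩, List.isChain_cons_cons.2 ⟨hij, hch⟩, rfl⟩,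
      by simp⟩

theorem exists_potential_of_cycle_sum_nonpos (hirr : ∀ i, ¬ S i i)
    (hcyc : CycleSumsNonpos S d) :
    ∃ w : α → ℝ, ∀ i j, S i j → d i j + w j ≤ w i := by
  refine ⟨fun i => sSup (List.walkWeight d '' simplePathsFrom S i), fun i j hij => ?_⟩
  suffices h : ∀ x ∈ List.walkWeight d '' simplePathsFrom S j,
      x ≤ sSup (List.walkWeight d '' simplePathsFrom S i) - d i j by
    have := csSup_le (Set.Nonempty.image _ ⟨_, singleton_mem_simplePathsFrom j⟩) h
    linarith
  rintro _ ⟨l, hl, rfl⟩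
  obtain ⟨l', hl', hle⟩ := exists_mem_simplePathsFrom_add_walkWeight_le hirr hcyc hij hl
  have := le_csSup ((finite_simplePathsFrom (S := S) i).image (List.walkWeight d)).bddAbove
    (Set.mem_image_of_mem _ hl')
  linarith

end Potential

section Rescaling

variable {ι 𝕜 : Type*} [Fintype ι] [DecidableEq ι] [RCLike 𝕜]

lemma prod_support_exp_sub_eq_one (σ : Perm ι) (w : ι → ℝ) :
    ∏ k ∈ σ.support, Real.exp (w (σ k) - w k) = 1 := by
  rw [← Real.exp_sum, sum_sub_distrib, Perm.sum_comp σ _ _ fun a ha => Perm.mem_support.2 ha,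
    sub_self, Real.exp_zero]

lemma sum_log_norm_sub_log_nonpos {X : Matrix ι ι 𝕜} {R : ℝ} (hR : 1 ≤ R) {σ : Perm ι}
    (hσ : σ.IsCycle) (hX : ‖∏ k ∈ σ.support, X k (σ k)‖ ≤ R)
    (hne : ∀ k ∈ σ.support, X k (σ k) ≠ 0) :
    ∑ k ∈ σ.support, (Real.log ‖X k (σ k)‖ - Real.log R) ≤ 0 := by
  have hlog : ∑ k ∈ σ.support, Real.log ‖X k (σ k)‖ ≤ Real.log R := by
    rw [← Real.log_prod fun k hk => norm_ne_zero_iff.2 (hne k hk), ← norm_prod]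
    exact Real.log_le_log (norm_pos_iff.2 (prod_ne_zero_iff.2 hne)) hX
  have hcard : (1 : ℝ) ≤ #σ.support := by
    exact_mod_cast one_le_two.trans hσ.two_le_card_support
  rw [sum_sub_distrib, sum_const, nsmul_eq_mul]
  nlinarith [Real.log_nonneg hR]

theorem exists_cycle_prod_eq_and_norm_le {X : Matrix ι ι 𝕜} {R : ℝ} (hR : 1 ≤ R)
    (hX : ∀ σ : Perm ι, σ.IsCycle → ‖∏ k ∈ σ.support, X k (σ k)‖ ≤ R) :
    ∃ Y : Matrix ι ι 𝕜, (∀ σ : Perm ι, σ.IsCycle →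
      ∏ k ∈ σ.support, Y k (σ k) = ∏ k ∈ σ.support, X k (σ k)) ∧ ∀ i j, ‖Y i j‖ ≤ R := by
  obtain ⟨w, hw⟩ := exists_potential_of_cycle_sum_nonpos (S := fun i j => i ≠ j ∧ X i j ≠ 0)
    (d := fun i j => Real.log ‖X i j‖ - Real.log R) (fun i h => h.1 rfl)
    fun σ hσ hS => sum_log_norm_sub_log_nonpos hR hσ (hX σ hσ) fun k hk => (hS k hk).2
  -- Diagonal entries occur in no cycle monomial.
  refine ⟨fun i j => if i = j then 0 else (Real.exp (w j - w i) : 𝕜) * X i j, fun σ hσ => ?_,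
    fun i j => ?_⟩
  · rw [prod_congr rfl fun k hk => if_neg (Perm.mem_support.1 hk).symm, prod_mul_distrib,
      ← RCLike.ofReal_prod, prod_support_exp_sub_eq_one, RCLike.ofReal_one, one_mul]
  · have hR0 : 0 ≤ R := zero_le_one.trans hR
    dsimp only
    split_ifs with hij
    · simpa using hR0
    by_cases hX0 : X i j = 0
    · simpa [hX0] using hR0
    have hpot := hw i j ⟨hij, hX0⟩
    rw [norm_mul, RCLike.norm_ofReal, abs_of_pos (Real.exp_pos _)]
    calc Real.exp (w j - w i) * ‖X i j‖ = Real.exp (w j - w i + Real.log ‖X i j‖) := by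
          rw [Real.exp_add, Real.exp_log (norm_pos_iff.2 hX0)]
      _ ≤ Real.exp (Real.log R) := Real.exp_le_exp.2 (by linarith)
      _ = R := Real.exp_log (by linarith)

end Rescaling

lemma isCompact_setOf_forall_norm_le {m n 𝕜 : Type*} [Finite m] [Finite n] [RCLike 𝕜]
    (R : ℝ) :
    IsCompact {X : Matrix m n 𝕜 | ∀ i j, ‖X i j‖ ≤ R} := by
  have h := isCompact_univ_pi fun _ : m => isCompact_univ_pi fun _ : n =>
    isCompact_closedBall (0 : 𝕜) R
  simp only [Set.pi, Set.mem_univ, mem_closedBall_zero_iff, forall_const] at h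
  exact h

/-- The image of the cycle-monomial map is closed in `ℂ^M`, where the coordinates
are indexed by the cyclic permutations of subsets of `{1,…,n}`. -/
theorem image_cycle_monomial_map_closed (n : ℕ) :
    IsClosed (Set.range (fun X : Matrix (Fin n) (Fin n) ℂ =>
      fun π : {σ : Equiv.Perm (Fin n) // σ.IsCycle} =>
        ∏ i ∈ (π : Equiv.Perm (Fin n)).support, X i ((π : Equiv.Perm (Fin n)) i))) := by
  classical
  set γ := fun (X : Matrix (Fin n) (Fin n) ℂ) (π : {σ : Perm (Fin n) // σ.IsCycle}) =>
    ∏ i ∈ (π : Perm (Fin n)).support, X i ((π : Perm (Fin n)) i)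
  have hγ : Continuous γ := by fun_prop
  refine isClosed_of_closure_subset fun p hp => ?_
  set R := ‖p‖ + 1
  set K := {X : Matrix (Fin n) (Fin n) ℂ | ∀ i j, ‖X i j‖ ≤ R}
  have hbounded : Metric.ball 0 R ∩ Set.range γ ⊆ γ '' K := by
    rintro _ ⟨hX, X, rfl⟩
    obtain ⟨Y, hYX, hY⟩ := exists_cycle_prod_eq_and_norm_le (by simp [R]) fun σ hσ =>
      ((norm_le_pi_norm (γ X) ⟨σ, hσ⟩).trans (mem_ball_zero_iff.1 hX).le)
    exact ⟨Y, hY, funext fun π => hYX π.1 π.2⟩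
  have hclosure : Metric.ball 0 R ∩ closure (Set.range γ) ⊆ γ '' K := calc
    _ ⊆ closure (Metric.ball 0 R ∩ Set.range γ) := Metric.isOpen_ball.inter_closure
    _ ⊆ closure (γ '' K) := closure_mono hbounded
    _ = γ '' K := ((isCompact_setOf_forall_norm_le R).image hγ).isClosed.closure_eq
  obtain ⟨X, -, hX⟩ := hclosure ⟨by simp [R], hp⟩
  exact ⟨X, hX⟩
end

section
/- Stillman's primality criterion: Let J be an ideal in k[x_1, ..., x_n] containing a polynomial f = g·x_1 + h where g and h do not involve x_1, and suppose g is a non-zerodivisor modulo J. Then J is prime if and only if the elimination ideal J ∩ k[x_2, ..., x_n] is prime. -/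
/-!
Modulo `J` we have `g * x₁ = -h`, so for every `p` some power `g ^ m * p` is congruent to an
element of `k[x₂,…,xₙ]`. A product `p * q ∈ J` thus yields a product `a * b` in the elimination
ideal; if that ideal is prime, one factor lies in it, and since `g` is a non-zerodivisor
modulo `J`, the corresponding factor `p` or `q` lies in `J`.
-/

open Polynomial

theorem Ideal.mem_of_pow_mul_mem {S : Type*} [CommSemiring S] {I : Ideal S} {s : S}
    (hs : ∀ p, s * p ∈ I → p ∈ I) (m : ℕ) {p : S} (hp : s ^ m * p ∈ I) : p ∈ I := by
  induction m with
  | zero => simpa using hp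
  | succ m ih => exact ih (hs _ (by rwa [← mul_assoc, ← pow_succ']))

section

variable {R S : Type*} [CommRing R] [CommRing S]

theorem Polynomial.exists_pow_mul_eq_C_of_map_eq_zero (φ : R[X] →+* S) {g h : R}
    (hφ : φ (C g * X + C h) = 0) (p : R[X]) :
    ∃ (m : ℕ) (a : R), φ (C g) ^ m * φ p = φ (C a) := by
  simp only [map_add, map_mul] at hφ
  induction p using Polynomial.induction_on with
  | C a => exact ⟨0, a, by rw [pow_zero, one_mul]⟩
  | add p q hp hq =>
    obtain ⟨m, a, ha⟩ := hp
    obtain ⟨l, b, hb⟩ := hq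
    refine ⟨m + l, g ^ l * a + g ^ m * b, ?_⟩
    simp only [map_add, map_mul, map_pow]
    linear_combination φ (C g) ^ l * ha + φ (C g) ^ m * hb
  | monomial i c hi =>
    obtain ⟨m, a, ha⟩ := hi
    refine ⟨m + 1, -(a * h), ?_⟩
    simp only [map_neg, map_mul, map_pow] at ha ⊢
    linear_combination φ (C g) * φ X * ha + φ (C a) * hφ

theorem Ideal.isPrime_of_isPrime_comap_C {J : Ideal R[X]} {g h : R} (hf : C g * X + C h ∈ J)
    (hg : ∀ p, C g * p ∈ J → p ∈ J) (hJ : (J.comap (C : R →+* R[X])).IsPrime) : J.IsPrime := by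
  let π := Ideal.Quotient.mk J
  have hπ : π (C g * X + C h) = 0 := Ideal.Quotient.eq_zero_iff_mem.2 hf
  have mem_iff {p : R[X]} {m : ℕ} {a : R} (e : π (C g) ^ m * π p = π (C a)) :
      C g ^ m * p ∈ J ↔ C a ∈ J := by
    rw [← Ideal.Quotient.eq_zero_iff_mem, ← Ideal.Quotient.eq_zero_iff_mem (a := C a),
      map_mul, map_pow, e]
  refine ⟨fun htop => hJ.ne_top (by rw [htop, Ideal.comap_top]), fun {p q} hpq => ?_⟩
  obtain ⟨m, a, ha⟩ := exists_pow_mul_eq_C_of_map_eq_zero π hπ p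
  obtain ⟨l, b, hb⟩ := exists_pow_mul_eq_C_of_map_eq_zero π hπ q
  have hab : a * b ∈ J.comap C := by
    have e : π (C g) ^ (m + l) * π (p * q) = π (C (a * b)) := by
      simp only [map_mul]
      linear_combination π (C g) ^ l * π q * ha + π (C a) * hb
    exact (mem_iff e).1 (J.mul_mem_left _ hpq)
  exact (hJ.mem_or_mem hab).imp (fun ha' => Ideal.mem_of_pow_mul_mem hg m ((mem_iff ha).2 ha'))
    (fun hb' => Ideal.mem_of_pow_mul_mem hg l ((mem_iff hb).2 hb'))

end

/-- Stillman's primality criterion. We model `k[x₁,…,xₙ]` as `(k[x₂,…,xₙ])[x₁]`,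
i.e. as `Polynomial (MvPolynomial (Fin n) k)`, with `x₁ = Polynomial.X`; the
elimination ideal `J ∩ k[x₂,…,xₙ]` is the contraction along `Polynomial.C`. -/
theorem stillman_primality_criterion {k : Type*} [Field k] (n : ℕ)
    (J : Ideal (Polynomial (MvPolynomial (Fin n) k)))
    (g h : MvPolynomial (Fin n) k)
    (hf : Polynomial.C g * Polynomial.X + Polynomial.C h ∈ J)
    (hg : ∀ p : Polynomial (MvPolynomial (Fin n) k),
      Polynomial.C g * p ∈ J → p ∈ J) :
    J.IsPrime ↔
      (J.comap (Polynomial.C :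
        MvPolynomial (Fin n) k →+* Polynomial (MvPolynomial (Fin n) k))).IsPrime :=
  ⟨fun hJ => hJ.comap _, Ideal.isPrime_of_isPrime_comap_C hf hg⟩
end

section
/- For a generic 4×4 matrix (c_{ij}) (entries being indeterminates over ℚ), the ideal generated by the 3×3 minors of the 4×4 matrix whose (i,i) entries are c_{ii}+x, c_{22}+y, c_{33}+z, c_{44}+w on the diagonal (i.e., diag(x,y,z,w) added to (c_{ij})) in the polynomial ring K[x,y,z,w], K = ℚ(c_{11},...,c_{44}), is a radical zero-dimensional ideal whose variety consists of exactly two distinct points over the algebraic closure of K. -/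
/-! On the locus where `N = C + diag(x, y, z, w)` has rank `≤ 2`, the `2 × 2` minor of `N` in
rows `{0, 1}` and columns `{2, 3}` is a constant, nonzero for generic `C`; so the locus is cut out
by the four `3 × 3` minors bordering it, which are bilinear in `(x, z)`, `(x, w)`, `(y, z)` and
`(y, w)`. Eliminating `z`, `w` and then `y` puts a quadratic `q(x)` into the ideal, and `y`, `z`,
`w` are polynomials in `x` modulo the ideal because their coefficients are coprime to `q`. Hence
every polynomial is congruent to an affine function of `x`. For generic `C` (checked by
specializing to one rational matrix) `q` has two distinct roots, each giving a point of the
variety; a polynomial vanishing at both is congruent to an affine function of `x` with two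
roots, hence lies in the ideal. -/

/-- The field `K = ℚ(c₁₁,…,c₄₄)` of rational functions in the 16 generic entries. -/
abbrev genField : Type := FractionRing (MvPolynomial (Fin 4 × Fin 4) ℚ)

/-- The generic entry `c_{ij}` viewed in `K`. -/
noncomputable def c (i j : Fin 4) : genField :=
  algebraMap (MvPolynomial (Fin 4 × Fin 4) ℚ) genField (MvPolynomial.X (i, j))

/-- The matrix `C + diag(x,y,z,w)` over `K[x,y,z,w]`. -/
noncomputable def M : Matrix (Fin 4) (Fin 4) (MvPolynomial (Fin 4) genField) :=
  fun i j => MvPolynomial.C (c i j) + if i = j then MvPolynomial.X i else 0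

/-- The ideal generated by the `3×3` minors of `M` in `K[x,y,z,w]`. -/
noncomputable def minors3Ideal : Ideal (MvPolynomial (Fin 4) genField) :=
  Ideal.span {p | ∃ r s : Fin 3 ↪ Fin 4, p = (M.submatrix r s).det}

open scoped Polynomial

namespace Matrix

theorem det_mul_eq_zero_of_card_lt {K m k : Type*} [Field K] [Fintype m] [DecidableEq m]
    [Fintype k] (B : Matrix m k K) (E : Matrix k m K) (h : Fintype.card k < Fintype.card m) :
    (B * E).det = 0 := by
  by_contra hdet
  have hrank := rank_of_isUnit _ ((isUnit_iff_isUnit_det _).mpr (Ne.isUnit hdet))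
  have := (rank_mul_le_left B E).trans (rank_le_card_width B)
  omega

variable {R : Type*} [CommRing R]

def addDiagonal {n S : Type*} [DecidableEq n] [CommRing S] [Algebra R S] (A : Matrix n n R)
    (d : n → S) : Matrix n n S :=
  A.map (algebraMap R S) + diagonal d

def minorsIdeal {n : ℕ} (k : ℕ) (N : Matrix (Fin n) (Fin n) R) : Ideal R :=
  Ideal.span {p | ∃ r s : Fin k ↪ Fin n, p = (N.submatrix r s).det}

theorem det_submatrix_mem_minorsIdeal {n k : ℕ} (N : Matrix (Fin n) (Fin n) R)
    {r s : Fin k → Fin n} (hr : Function.Injective r) (hs : Function.Injective s) :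
    (N.submatrix r s).det ∈ N.minorsIdeal k :=
  Ideal.subset_span ⟨⟨r, hr⟩, ⟨s, hs⟩, rfl⟩

end Matrix

namespace Polynomial

theorem eq_quadratic_of_natDegree_le_two {R : Type*} [Semiring R] {q : R[X]}
    (hq : q.natDegree ≤ 2) : q = C (q.coeff 2) * X ^ 2 + C (q.coeff 1) * X + C (q.coeff 0) := by
  ext n
  rcases n with _ | _ | _ | n
  · simp
  · simp
  · simp
  · simp [coeff_eq_zero_of_natDegree_lt (show q.natDegree < n + 3 by omega)]

variable {F L : Type*} [Field F] [Field L] [Algebra F L]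

/-- Up to sign, the resultant of a polynomial of degree `≤ 1` and one of degree `≤ 2`. -/
def linQuadResultant {R : Type*} [CommRing R] (v q : R[X]) : R :=
  q.coeff 2 * v.coeff 0 ^ 2 - q.coeff 1 * v.coeff 0 * v.coeff 1 + q.coeff 0 * v.coeff 1 ^ 2

theorem isCoprime_linear_quadratic {p r e f g : F} (h : g * p ^ 2 - f * p * r + e * r ^ 2 ≠ 0) :
    IsCoprime (C r * X + C p) (C g * X ^ 2 + C f * X + C e) := by
  set ρ := g * p ^ 2 - f * p * r + e * r ^ 2
  have hinv : C ρ⁻¹ * (C g * C p ^ 2 - C f * C p * C r + C e * C r ^ 2) = 1 := by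
    simp only [← map_pow, ← map_mul, ← map_sub, ← map_add, inv_mul_cancel₀ h, C_1, ρ]
  exact ⟨-C ρ⁻¹ * (C g * C r * X + C f * C r - C g * C p), C ρ⁻¹ * C r ^ 2,
    by linear_combination hinv⟩

theorem isCoprime_of_linQuadResultant_ne_zero {v q : F[X]} (hv : v.natDegree ≤ 1)
    (hq : q.natDegree ≤ 2) (h : linQuadResultant v q ≠ 0) : IsCoprime v q := by
  rw [eq_X_add_C_of_natDegree_le_one hv, eq_quadratic_of_natDegree_le_two hq]
  exact isCoprime_linear_quadratic h

theorem eq_zero_of_natDegree_lt_card_of_aeval_eq_zero (p : F[X]) (s : Finset L)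
    (hs : ∀ x ∈ s, aeval x p = 0) (hcard : p.natDegree < s.card) : p = 0 :=
  map_injective _ (algebraMap F L).injective <| by
    simpa using eq_zero_of_natDegree_lt_card_of_eval_eq_zero' (p.map (algebraMap F L)) s
      (by simpa [eval_map_algebraMap] using hs) (by rwa [natDegree_map])

theorem exists_ne_aeval_eq_zero_of_discrim_ne_zero [IsAlgClosed L] {q : F[X]}
    (hq : q.natDegree = 2) (hdisc : discrim (q.coeff 2) (q.coeff 1) (q.coeff 0) ≠ 0) :
    ∃ r s : L, r ≠ s ∧ aeval r q = 0 ∧ aeval s q = 0 := by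
  have hq0 : q ≠ 0 := by rintro rfl; simp at hq
  obtain ⟨r, hr⟩ := IsAlgClosed.exists_aeval_eq_zero L q
    (by rw [degree_eq_natDegree hq0, hq]; exact two_ne_zero)
  have hg : algebraMap F L (q.coeff 2) ≠ 0 := by
    rw [map_ne_zero_iff _ (algebraMap F L).injective, ← hq, coeff_natDegree]
    exact leadingCoeff_ne_zero.mpr hq0
  have hdisc' := (map_ne_zero_iff _ (algebraMap F L).injective).mpr hdisc
  have hroot : ∀ x : L, aeval x q = algebraMap F L (q.coeff 2) * x ^ 2
      + algebraMap F L (q.coeff 1) * x + algebraMap F L (q.coeff 0) := fun x => by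
    conv_lhs => rw [eq_quadratic_of_natDegree_le_two hq.le]
    simp
  set g := algebraMap F L (q.coeff 2)
  set f := algebraMap F L (q.coeff 1)
  set e := algebraMap F L (q.coeff 0)
  simp only [discrim, map_sub, map_mul, map_pow, map_ofNat] at hdisc'
  rw [hroot] at hr
  -- By Vieta, the second root is `-f / g - r`; it is a different one since `f² - 4eg ≠ 0`.
  refine ⟨r, -f / g - r, fun hrs => hdisc' ?_, by rwa [hroot], ?_⟩
  · have : 2 * g * r + f = 0 := by field_simp at hrs; linear_combination hrs
    linear_combination (2 * g * r + f) * this - 4 * g * hr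
  · rw [hroot]
    field_simp
    linear_combination g * hr

end Polynomial

theorem MvPolynomial.aeval_polynomial_aeval_X {R σ S : Type*} [CommSemiring R] [CommSemiring S]
    [Algebra R S] (x : σ → S) (i : σ) (h : R[X]) :
    aeval x (Polynomial.aeval (X i : MvPolynomial σ R) h) = Polynomial.aeval (x i) h := by
  rw [← Polynomial.aeval_algHom_apply, aeval_X]

section OneVariable

open MvPolynomial

variable {F σ : Type*} [Field F] {I : Ideal (MvPolynomial σ F)} {i : σ}

theorem exists_sub_aeval_mem_of_isCoprime {j : σ} {u v q : F[X]}
    (hq : Polynomial.aeval (X i) q ∈ I)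
    (hrel : Polynomial.aeval (X i) v * X j - Polynomial.aeval (X i) u ∈ I)
    (hvq : IsCoprime v q) : ∃ h : F[X], X j - Polynomial.aeval (X i) h ∈ I := by
  obtain ⟨a, b, hab⟩ := hvq
  have hbez : Polynomial.aeval (X i : MvPolynomial σ F) a * Polynomial.aeval (X i) v
      + Polynomial.aeval (X i) b * Polynomial.aeval (X i) q = 1 := by
    rw [← map_mul, ← map_mul, ← map_add, hab, map_one]
  refine ⟨a * u, ?_⟩
  have key : (X j : MvPolynomial σ F) - Polynomial.aeval (X i) (a * u)
      = Polynomial.aeval (X i) a * (Polynomial.aeval (X i) v * X j - Polynomial.aeval (X i) u)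
        + X j * Polynomial.aeval (X i) b * Polynomial.aeval (X i) q := by
    rw [map_mul]
    linear_combination -(X j : MvPolynomial σ F) * hbez
  rw [key]
  exact I.add_mem (I.mul_mem_left _ hrel) (I.mul_mem_left _ hq)

theorem exists_sub_aeval_mem (hX : ∀ j, ∃ h : F[X], X j - Polynomial.aeval (X i) h ∈ I)
    (p : MvPolynomial σ F) : ∃ h : F[X], p - Polynomial.aeval (X i) h ∈ I := by
  induction p using MvPolynomial.induction_on with
  | C a => exact ⟨Polynomial.C a, by simp⟩
  | add p p' hp hp' =>
    obtain ⟨h, hh⟩ := hp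
    obtain ⟨h', hh'⟩ := hp'
    exact ⟨h + h', by rw [map_add, add_sub_add_comm]; exact I.add_mem hh hh'⟩
  | mul_X p j hp =>
    obtain ⟨h, hh⟩ := hp
    obtain ⟨h', hh'⟩ := hX j
    refine ⟨h * h', ?_⟩
    have key : p * X j - Polynomial.aeval (X i) (h * h') = X j * (p - Polynomial.aeval (X i) h)
        + Polynomial.aeval (X i) h * (X j - Polynomial.aeval (X i) h') := by
      rw [map_mul]; ring
    rw [key]
    exact I.add_mem (I.mul_mem_left _ hh) (I.mul_mem_left _ hh')

theorem exists_sub_aeval_mem_of_degree_lt {q : F[X]} (hq0 : q ≠ 0)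
    (hq : Polynomial.aeval (X i) q ∈ I)
    (hX : ∀ j, ∃ h : F[X], X j - Polynomial.aeval (X i) h ∈ I) (p : MvPolynomial σ F) :
    ∃ h : F[X], h.degree < q.degree ∧ p - Polynomial.aeval (X i) h ∈ I := by
  obtain ⟨h, hh⟩ := exists_sub_aeval_mem hX p
  refine ⟨h % q, Polynomial.degree_mod_lt h hq0, ?_⟩
  have key : p - Polynomial.aeval (X i) (h % q) = (p - Polynomial.aeval (X i) h)
      + Polynomial.aeval (X i) q * Polynomial.aeval (X i) (h / q) := by
    rw [← map_mul, ← sub_eq_of_eq_add' (EuclideanDomain.div_add_mod h q).symm, map_sub]; ring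
  rw [key]
  exact I.add_mem hh (I.mul_mem_right _ hq)

variable {L : Type*} [Field L] [Algebra F L]

theorem eq_aeval_of_sub_mem {x : σ → L} (hx : ∀ p ∈ I, aeval x p = 0) {j : σ} {h : F[X]}
    (hh : X j - Polynomial.aeval (X i) h ∈ I) : x j = Polynomial.aeval (x i) h := by
  simpa [sub_eq_zero, aeval_polynomial_aeval_X] using hx _ hh

/-- Modulo `I` every polynomial is a polynomial of degree `< card ι` in `X i`, which is
determined by its values at the zeros `P k`. -/
theorem isRadical_and_zeroLocus_eq_range {ι : Type*} [Fintype ι] {q : F[X]} (hq0 : q ≠ 0)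
    (hqdeg : q.natDegree ≤ Fintype.card ι) (hq : Polynomial.aeval (X i) q ∈ I)
    (hX : ∀ j, ∃ h : F[X], X j - Polynomial.aeval (X i) h ∈ I) {P : ι → σ → L}
    (hP : Function.Injective fun k => P k i) (hzero : ∀ k, ∀ p ∈ I, aeval (P k) p = 0) :
    I.IsRadical ∧ {x : σ → L | ∀ p ∈ I, aeval x p = 0} = Set.range P := by
  classical
  set roots := Finset.univ.image fun k => P k i
  have hcard : roots.card = Fintype.card ι := by
    rw [Finset.card_image_of_injective _ hP, Finset.card_univ]
  constructor
  · rintro p ⟨n, hn⟩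
    obtain ⟨h, hdeg, hmem⟩ := exists_sub_aeval_mem_of_degree_lt hq0 hq hX p
    have h0 : h = 0 := by
      by_contra hh
      refine hh (Polynomial.eq_zero_of_natDegree_lt_card_of_aeval_eq_zero h roots ?_ ?_)
      · simp only [roots, Finset.mem_image, Finset.mem_univ, true_and]
        rintro _ ⟨k, rfl⟩
        have hp : aeval (P k) p = 0 := (pow_eq_zero_iff'.mp (by simpa using hzero k _ hn)).1
        simpa [hp, aeval_polynomial_aeval_X] using hzero k _ hmem
      · exact hcard ▸ (Polynomial.natDegree_lt_natDegree hh hdeg).trans_le hqdeg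
    simpa [h0] using hmem
  · ext x
    refine ⟨fun hx => ?_, by rintro ⟨k, rfl⟩; exact hzero k⟩
    obtain ⟨k, hk⟩ : ∃ k, P k i = x i := by
      by_contra! hnew
      refine hq0 (Polynomial.eq_zero_of_natDegree_lt_card_of_aeval_eq_zero q (insert (x i) roots)
        ?_ ?_)
      · simp only [roots, Finset.mem_insert, Finset.mem_image, Finset.mem_univ, true_and]
        rintro y (rfl | ⟨k, rfl⟩)
        · simpa [aeval_polynomial_aeval_X] using hx _ hq
        · simpa [aeval_polynomial_aeval_X] using hzero k _ hq
      · rw [Finset.card_insert_of_notMem (by simpa [roots] using hnew), hcard]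
        omega
    refine ⟨k, funext fun j => ?_⟩
    obtain ⟨h, hh⟩ := hX j
    rw [eq_aeval_of_sub_mem hx hh, eq_aeval_of_sub_mem (hzero k) hh, hk]

end OneVariable

namespace RankTwoLocus

open Polynomial Matrix

variable {R : Type*} [CommRing R]

def pivotMinor (N : Matrix (Fin 4) (Fin 4) R) : R := N 0 2 * N 1 3 - N 0 3 * N 1 2

theorem pivotMinor_mul_eq (N : Matrix (Fin 4) (Fin 4) R) (i j : Fin 4) :
    pivotMinor N * N i j = (N 1 3 * N 0 j - N 0 3 * N 1 j) * N i 2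
      + (N 0 2 * N 1 j - N 1 2 * N 0 j) * N i 3 + (N.submatrix ![0, 1, i] ![j, 2, 3]).det := by
  rw [det_fin_three]
  simp [pivotMinor]
  ring

theorem det_submatrix_eq_zero_of_pivotMinor_ne_zero {K : Type*} [Field K]
    {N : Matrix (Fin 4) (Fin 4) K} (hN : pivotMinor N ≠ 0)
    (h20 : (N.submatrix ![0, 1, 2] ![0, 2, 3]).det = 0)
    (h21 : (N.submatrix ![0, 1, 2] ![1, 2, 3]).det = 0)
    (h30 : (N.submatrix ![0, 1, 3] ![0, 2, 3]).det = 0)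
    (h31 : (N.submatrix ![0, 1, 3] ![1, 2, 3]).det = 0)
    (r s : Fin 3 → Fin 4) : (N.submatrix r s).det = 0 := by
  have hbordered : ∀ i j, (N.submatrix ![0, 1, i] ![j, 2, 3]).det = 0 := by
    intro i j
    fin_cases i <;> fin_cases j <;> first | assumption | (rw [det_fin_three]; simp <;> ring)
  let B : Matrix (Fin 4) (Fin 2) K := of fun i k => N i (![2, 3] k)
  let E : Matrix (Fin 2) (Fin 4) K := of fun k j =>
    ![N 1 3 * N 0 j - N 0 3 * N 1 j, N 0 2 * N 1 j - N 1 2 * N 0 j] k / pivotMinor N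
  have hBE : N = B * E := by
    ext i j
    have := pivotMinor_mul_eq N i j
    rw [hbordered, add_zero] at this
    simp only [B, E, mul_apply, Fin.sum_univ_two, of_apply, cons_val_zero, cons_val_one]
    field_simp
    linear_combination this
  rw [hBE, submatrix_mul _ _ _ id _ Function.bijective_id]
  exact det_mul_eq_zero_of_card_lt _ _ (by simp)

variable (A : Matrix (Fin 4) (Fin 4) R)

/- With `x` the variable of `R[X]` and `N = A + diag(x, y, z, w)`: where the minors of `N`
bordering `pivotMinor A` vanish, `pivotMinor A • N₀ = colCoeff₂ A • N₂ + colCoeff₃ A • N₃` for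
the columns `Nⱼ` of `N`, and `z = numZ A / colCoeff₂ A`, `w = numW A / colCoeff₃ A`,
`y = numY₂ A / denY₂ A = numY₃ A / denY₃ A` (eliminating `z`, resp. `w`); `eliminant A` is the
numerator of the difference of the two expressions for `y`. -/

noncomputable def colCoeff₂ : R[X] := C (A 1 3) * (X + C (A 0 0)) - C (A 0 3 * A 1 0)

noncomputable def colCoeff₃ : R[X] := C (A 0 2 * A 1 0) - C (A 1 2) * (X + C (A 0 0))

noncomputable def numZ : R[X] :=
  C (pivotMinor A * A 2 0) - colCoeff₂ A * C (A 2 2) - colCoeff₃ A * C (A 2 3)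

noncomputable def numW : R[X] :=
  C (pivotMinor A * A 3 0) - colCoeff₂ A * C (A 3 2) - colCoeff₃ A * C (A 3 3)

noncomputable def numY₂ : R[X] :=
  C (pivotMinor A) * (C (A 2 0 * (A 1 3 * A 0 1 - A 0 3 * A 1 1)) - C (A 2 1) * colCoeff₂ A)
    + C (A 2 3) * (C (A 0 2 * A 1 1 - A 1 2 * A 0 1) * colCoeff₂ A
      - C (A 1 3 * A 0 1 - A 0 3 * A 1 1) * colCoeff₃ A)

noncomputable def denY₂ : R[X] :=
  C (pivotMinor A * A 0 3 * A 2 0)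
    - C (A 2 3) * (C (A 0 3) * colCoeff₃ A + C (A 0 2) * colCoeff₂ A)

noncomputable def numY₃ : R[X] :=
  C (pivotMinor A) * (C (A 3 0 * (A 0 2 * A 1 1 - A 1 2 * A 0 1)) - C (A 3 1) * colCoeff₃ A)
    + C (A 3 2) * (C (A 1 3 * A 0 1 - A 0 3 * A 1 1) * colCoeff₃ A
      - C (A 0 2 * A 1 1 - A 1 2 * A 0 1) * colCoeff₂ A)

noncomputable def denY₃ : R[X] :=
  C (A 3 2) * (C (A 0 2) * colCoeff₂ A + C (A 0 3) * colCoeff₃ A)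
    - C (pivotMinor A * A 0 2 * A 3 0)

noncomputable def eliminant : R[X] := denY₂ A * numY₃ A - denY₃ A * numY₂ A

/-- `A` counts as generic when this polynomial in its entries does not vanish. -/
noncomputable def nondegeneracy : R :=
  pivotMinor A * (eliminant A).coeff 2
    * discrim ((eliminant A).coeff 2) ((eliminant A).coeff 1) ((eliminant A).coeff 0)
    * linQuadResultant (colCoeff₂ A) (eliminant A) * linQuadResultant (colCoeff₃ A) (eliminant A)
    * linQuadResultant (denY₂ A) (eliminant A)

section BorderedMinors

variable {S : Type*} [CommRing S] [Algebra R S] (d : Fin 4 → S)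

theorem pivotMinor_addDiagonal :
    pivotMinor (A.addDiagonal d) = algebraMap R S (pivotMinor A) := by
  simp [addDiagonal, pivotMinor]

theorem det_bordered_20 : ((A.addDiagonal d).submatrix ![0, 1, 2] ![0, 2, 3]).det
    = aeval (d 0) (numZ A) - aeval (d 0) (colCoeff₂ A) * d 2 := by
  rw [det_fin_three]
  simp [addDiagonal, numZ, colCoeff₂, colCoeff₃, pivotMinor]
  ring

theorem det_bordered_30 : ((A.addDiagonal d).submatrix ![0, 1, 3] ![0, 2, 3]).det
    = aeval (d 0) (numW A) - aeval (d 0) (colCoeff₃ A) * d 3 := by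
  rw [det_fin_three]
  simp [addDiagonal, numW, colCoeff₂, colCoeff₃, pivotMinor]
  ring

theorem det_bordered_21 : aeval (d 0) (denY₂ A) * d 1 - aeval (d 0) (numY₂ A)
    = aeval (d 0) (colCoeff₂ A) * ((A.addDiagonal d).submatrix ![0, 1, 2] ![1, 2, 3]).det
      - (A.addDiagonal d 1 3 * A.addDiagonal d 0 1 - A.addDiagonal d 0 3 * A.addDiagonal d 1 1)
        * ((A.addDiagonal d).submatrix ![0, 1, 2] ![0, 2, 3]).det := by
  rw [det_fin_three, det_fin_three]
  simp [addDiagonal, numY₂, denY₂, colCoeff₂, colCoeff₃, pivotMinor]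
  ring

theorem det_bordered_31 : aeval (d 0) (denY₃ A) * d 1 - aeval (d 0) (numY₃ A)
    = aeval (d 0) (colCoeff₃ A) * ((A.addDiagonal d).submatrix ![0, 1, 3] ![1, 2, 3]).det
      - (A.addDiagonal d 0 2 * A.addDiagonal d 1 1 - A.addDiagonal d 1 2 * A.addDiagonal d 0 1)
        * ((A.addDiagonal d).submatrix ![0, 1, 3] ![0, 2, 3]).det := by
  rw [det_fin_three, det_fin_three]
  simp [addDiagonal, numY₃, denY₃, colCoeff₂, colCoeff₃, pivotMinor]
  ring

end BorderedMinors

theorem natDegree_colCoeff₂_le : (colCoeff₂ A).natDegree ≤ 1 := by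
  unfold colCoeff₂; compute_degree

theorem natDegree_colCoeff₃_le : (colCoeff₃ A).natDegree ≤ 1 := by
  unfold colCoeff₃; compute_degree

theorem natDegree_denY₂_le : (denY₂ A).natDegree ≤ 1 := by
  unfold denY₂ colCoeff₂ colCoeff₃; compute_degree

theorem natDegree_eliminant_le : (eliminant A).natDegree ≤ 2 := by
  unfold eliminant denY₂ denY₃ numY₂ numY₃ colCoeff₂ colCoeff₃; compute_degree

theorem nondegeneracy_map {S : Type*} [CommRing S] (φ : R →+* S) :
    nondegeneracy (A.map φ) = φ (nondegeneracy A) := by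
  have h₂ : colCoeff₂ (A.map φ) = (colCoeff₂ A).map φ := by simp [colCoeff₂]
  have h₃ : colCoeff₃ (A.map φ) = (colCoeff₃ A).map φ := by simp [colCoeff₃]
  have hpivot : pivotMinor (A.map φ) = φ (pivotMinor A) := by simp [pivotMinor]
  have hden : denY₂ (A.map φ) = (denY₂ A).map φ := by simp [denY₂, h₂, h₃, hpivot]
  have helim : eliminant (A.map φ) = (eliminant A).map φ := by
    simp [eliminant, denY₂, denY₃, numY₂, numY₃, h₂, h₃, hpivot]
  simp [nondegeneracy, linQuadResultant, discrim, h₂, h₃, hpivot, hden, helim, map_ofNat]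

theorem properties_of_nondegeneracy_ne_zero {F : Type*} [Field F]
    {A : Matrix (Fin 4) (Fin 4) F} (hA : nondegeneracy A ≠ 0) :
    pivotMinor A ≠ 0 ∧ (eliminant A).natDegree = 2
      ∧ discrim ((eliminant A).coeff 2) ((eliminant A).coeff 1) ((eliminant A).coeff 0) ≠ 0
      ∧ IsCoprime (colCoeff₂ A) (eliminant A) ∧ IsCoprime (colCoeff₃ A) (eliminant A)
      ∧ IsCoprime (denY₂ A) (eliminant A) := by
  simp only [nondegeneracy, mul_ne_zero_iff] at hA
  obtain ⟨⟨⟨⟨⟨hpivot, hlead⟩, hdisc⟩, h₂⟩, h₃⟩, hden⟩ := hA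
  have hdeg := natDegree_eliminant_le A
  exact ⟨hpivot, le_antisymm hdeg (le_natDegree_of_ne_zero hlead), hdisc,
    isCoprime_of_linQuadResultant_ne_zero (natDegree_colCoeff₂_le A) hdeg h₂,
    isCoprime_of_linQuadResultant_ne_zero (natDegree_colCoeff₃_le A) hdeg h₃,
    isCoprime_of_linQuadResultant_ne_zero (natDegree_denY₂_le A) hdeg hden⟩

end RankTwoLocus

namespace RankTwoLocus

open MvPolynomial Matrix

variable {F : Type*} [Field F]

noncomputable def rankLeTwoIdeal (A : Matrix (Fin 4) (Fin 4) F) :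
    Ideal (MvPolynomial (Fin 4) F) :=
  (A.addDiagonal X).minorsIdeal 3

theorem aeval_det_submatrix_addDiagonal {n k : ℕ} {L : Type*} [CommRing L] [Algebra F L]
    (A : Matrix (Fin n) (Fin n) F) (x : Fin n → L) (r s : Fin k → Fin n) :
    aeval x ((A.addDiagonal (X : Fin n → MvPolynomial (Fin n) F)).submatrix r s).det
      = ((A.addDiagonal x).submatrix r s).det := by
  rw [AlgHom.map_det]
  congr 1
  ext i j
  by_cases h : r i = s j <;> simp [addDiagonal, h]

section Membership

variable (A : Matrix (Fin 4) (Fin 4) F)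

local notation "φ" => Polynomial.aeval (X 0 : MvPolynomial (Fin 4) F)

theorem det_bordered_mem {i j : Fin 4} (hi : 2 ≤ i) (hj : j < 2) :
    ((A.addDiagonal X).submatrix ![0, 1, i] ![j, 2, 3]).det ∈ rankLeTwoIdeal A := by
  apply det_submatrix_mem_minorsIdeal
  · fin_cases i <;> first | decide | (exfalso; revert hi; decide)
  · fin_cases j <;> first | decide | (exfalso; revert hj; decide)

theorem colCoeff₂_mul_X_sub_mem : φ (colCoeff₂ A) * X 2 - φ (numZ A) ∈ rankLeTwoIdeal A := by
  have := neg_mem (det_bordered_mem A (i := 2) (j := 0) le_rfl (by decide))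
  rwa [det_bordered_20, neg_sub] at this

theorem colCoeff₃_mul_X_sub_mem : φ (colCoeff₃ A) * X 3 - φ (numW A) ∈ rankLeTwoIdeal A := by
  have := neg_mem (det_bordered_mem A (i := 3) (j := 0) (by decide) (by decide))
  rwa [det_bordered_30, neg_sub] at this

theorem denY₂_mul_X_sub_mem : φ (denY₂ A) * X 1 - φ (numY₂ A) ∈ rankLeTwoIdeal A := by
  rw [det_bordered_21]
  exact sub_mem (Ideal.mul_mem_left _ _ (det_bordered_mem A (by decide) (by decide)))
    (Ideal.mul_mem_left _ _ (det_bordered_mem A (by decide) (by decide)))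

theorem denY₃_mul_X_sub_mem : φ (denY₃ A) * X 1 - φ (numY₃ A) ∈ rankLeTwoIdeal A := by
  rw [det_bordered_31]
  exact sub_mem (Ideal.mul_mem_left _ _ (det_bordered_mem A (by decide) (by decide)))
    (Ideal.mul_mem_left _ _ (det_bordered_mem A (by decide) (by decide)))

theorem eliminant_mem : φ (eliminant A) ∈ rankLeTwoIdeal A := by
  have key : φ (eliminant A) = φ (denY₃ A) * (φ (denY₂ A) * X 1 - φ (numY₂ A))
      - φ (denY₂ A) * (φ (denY₃ A) * X 1 - φ (numY₃ A)) := by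
    rw [eliminant, map_sub, map_mul, map_mul]; ring
  rw [key]
  exact sub_mem (Ideal.mul_mem_left _ _ (denY₂_mul_X_sub_mem A))
    (Ideal.mul_mem_left _ _ (denY₃_mul_X_sub_mem A))

theorem exists_X_sub_aeval_mem (h₂ : IsCoprime (colCoeff₂ A) (eliminant A))
    (h₃ : IsCoprime (colCoeff₃ A) (eliminant A)) (hden : IsCoprime (denY₂ A) (eliminant A))
    (j : Fin 4) : ∃ h : F[X], X j - φ h ∈ rankLeTwoIdeal A := by
  fin_cases j
  · exact ⟨Polynomial.X, by simp⟩
  · exact exists_sub_aeval_mem_of_isCoprime (eliminant_mem A) (denY₂_mul_X_sub_mem A) hden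
  · exact exists_sub_aeval_mem_of_isCoprime (eliminant_mem A) (colCoeff₂_mul_X_sub_mem A) h₂
  · exact exists_sub_aeval_mem_of_isCoprime (eliminant_mem A) (colCoeff₃_mul_X_sub_mem A) h₃

end Membership

variable {L : Type*} [Field L] [Algebra F L] {A : Matrix (Fin 4) (Fin 4) F}

variable (A) in
noncomputable def locusPoint (r : L) : Fin 4 → L :=
  ![r, Polynomial.aeval r (numY₂ A) / Polynomial.aeval r (denY₂ A),
    Polynomial.aeval r (numZ A) / Polynomial.aeval r (colCoeff₂ A),
    Polynomial.aeval r (numW A) / Polynomial.aeval r (colCoeff₃ A)]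

theorem aeval_locusPoint_eq_zero (hpivot : pivotMinor A ≠ 0)
    (h₂ : IsCoprime (colCoeff₂ A) (eliminant A)) (h₃ : IsCoprime (colCoeff₃ A) (eliminant A))
    (hden : IsCoprime (denY₂ A) (eliminant A)) {r : L}
    (hr : Polynomial.aeval r (eliminant A) = 0) :
    ∀ p ∈ rankLeTwoIdeal A, aeval (locusPoint A r) p = 0 := by
  have h₂r := (Polynomial.aeval_ne_zero_of_isCoprime h₂ r).resolve_right (not_not.mpr hr)
  have h₃r := (Polynomial.aeval_ne_zero_of_isCoprime h₃ r).resolve_right (not_not.mpr hr)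
  have hdenr := (Polynomial.aeval_ne_zero_of_isCoprime hden r).resolve_right (not_not.mpr hr)
  have h20 : ((A.addDiagonal (locusPoint A r)).submatrix ![0, 1, 2] ![0, 2, 3]).det = 0 := by
    rw [det_bordered_20]
    simp [locusPoint, mul_div_cancel₀ _ h₂r]
  have h30 : ((A.addDiagonal (locusPoint A r)).submatrix ![0, 1, 3] ![0, 2, 3]).det = 0 := by
    rw [det_bordered_30]
    simp [locusPoint, mul_div_cancel₀ _ h₃r]
  have h21 : ((A.addDiagonal (locusPoint A r)).submatrix ![0, 1, 2] ![1, 2, 3]).det = 0 := by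
    have hy : Polynomial.aeval r (denY₂ A) * locusPoint A r 1
        - Polynomial.aeval r (numY₂ A) = 0 := by
      simp [locusPoint, mul_div_cancel₀ _ hdenr]
    have := det_bordered_21 A (locusPoint A r)
    rw [h20, mul_zero, sub_zero] at this
    exact (mul_eq_zero.mp (this.symm.trans hy)).resolve_left h₂r
  have h31 : ((A.addDiagonal (locusPoint A r)).submatrix ![0, 1, 3] ![1, 2, 3]).det = 0 := by
    have hy : Polynomial.aeval r (denY₃ A) * locusPoint A r 1
        - Polynomial.aeval r (numY₃ A) = 0 := by
      simp only [eliminant, map_sub, map_mul] at hr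
      simp only [locusPoint, cons_val_one, cons_val_zero]
      field_simp
      linear_combination -hr
    have := det_bordered_31 A (locusPoint A r)
    rw [h30, mul_zero, sub_zero] at this
    exact (mul_eq_zero.mp (this.symm.trans hy)).resolve_left h₃r
  intro p hp
  refine (Ideal.span_le (I := RingHom.ker (aeval (locusPoint A r)))).mpr ?_ hp
  rintro _ ⟨r', s', rfl⟩
  rw [SetLike.mem_coe, RingHom.mem_ker, aeval_det_submatrix_addDiagonal]
  exact det_submatrix_eq_zero_of_pivotMinor_ne_zero
    (by rwa [pivotMinor_addDiagonal, map_ne_zero_iff _ (algebraMap F L).injective])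
    h20 h21 h30 h31 _ _

theorem isRadical_rankLeTwoIdeal_and_zeroLocus_eq_pair [IsAlgClosed L]
    (hA : nondegeneracy A ≠ 0) :
    (rankLeTwoIdeal A).IsRadical ∧ ∃ a b : Fin 4 → L, a ≠ b ∧
      {x : Fin 4 → L | ∀ p ∈ rankLeTwoIdeal A, aeval x p = 0} = {a, b} := by
  obtain ⟨hpivot, hdeg, hdisc, h₂, h₃, hden⟩ := properties_of_nondegeneracy_ne_zero hA
  obtain ⟨r, s, hrs, hr, hs⟩ :=
    Polynomial.exists_ne_aeval_eq_zero_of_discrim_ne_zero (L := L) hdeg hdisc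
  obtain ⟨hrad, hlocus⟩ := isRadical_and_zeroLocus_eq_range (ι := Fin 2)
    (P := ![locusPoint A r, locusPoint A s]) (by rintro h; simp [h] at hdeg) (by simp [hdeg])
    (eliminant_mem A) (exists_X_sub_aeval_mem A h₂ h₃ hden)
    (by intro k l; fin_cases k <;> fin_cases l <;> simp [locusPoint, hrs, hrs.symm])
    (by intro k; fin_cases k
        exacts [aeval_locusPoint_eq_zero hpivot h₂ h₃ hden hr,
          aeval_locusPoint_eq_zero hpivot h₂ h₃ hden hs])
  exact ⟨hrad, _, _, fun h => hrs (congrFun h 0), hlocus.trans (range_cons_cons_empty _ _ _)⟩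

end RankTwoLocus

namespace RankTwoLocus

open Polynomial

def specialMatrix : Matrix (Fin 4) (Fin 4) ℚ :=
  !![-1, 2, 7, -9; 5, -2, -8, -4; -6, 2, 6, -2; 3, 8, -6, 9]

theorem nondegeneracy_specialMatrix_ne_zero : nondegeneracy specialMatrix ≠ 0 := by
  have h₂ : colCoeff₂ specialMatrix = C (-4) * X + C 49 := Polynomial.funext fun t => by
    simp [colCoeff₂, specialMatrix]; ring
  have h₃ : colCoeff₃ specialMatrix = C 8 * X + C 27 := Polynomial.funext fun t => by
    simp [colCoeff₃, specialMatrix]; ring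
  have hden : denY₂ specialMatrix = C (-200) * X + C (-5200) := Polynomial.funext fun t => by
    simp [denY₂, colCoeff₂, colCoeff₃, pivotMinor, specialMatrix]; ring
  have helim : eliminant specialMatrix
      = C (-800000) * X ^ 2 + C (-38440000) * X + C (-123060000) :=
    Polynomial.funext fun t => by
      simp [eliminant, denY₂, denY₃, numY₂, numY₃, colCoeff₂, colCoeff₃, pivotMinor,
        specialMatrix]
      ring
  rw [nondegeneracy, h₂, h₃, hden, helim]
  simp [linQuadResultant, discrim, pivotMinor, specialMatrix, coeff_X, coeff_C]
  norm_num

theorem nondegeneracy_c_ne_zero : nondegeneracy (Matrix.of c) ≠ 0 := by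
  let generic : Matrix (Fin 4) (Fin 4) (MvPolynomial (Fin 4 × Fin 4) ℚ) :=
    Matrix.of fun i j => MvPolynomial.X (i, j)
  have hc : Matrix.of c = generic.map (algebraMap _ genField) := by ext; rfl
  have hspecial : specialMatrix
      = generic.map (MvPolynomial.eval fun ij => specialMatrix ij.1 ij.2) := by
    ext; simp [generic]
  rw [hc, nondegeneracy_map, map_ne_zero_iff _ (IsFractionRing.injective _ _)]
  intro h0
  apply nondegeneracy_specialMatrix_ne_zero
  rw [hspecial, nondegeneracy_map, h0, map_zero]

end RankTwoLocus

/-- The ideal of `3×3` minors of `C + diag(x,y,z,w)` is radical and its variety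
over the algebraic closure of `K` consists of exactly two distinct points. -/
theorem minors3Ideal_radical_two_points :
    minors3Ideal.IsRadical ∧
    ∃ a b : Fin 4 → AlgebraicClosure genField, a ≠ b ∧
      {x : Fin 4 → AlgebraicClosure genField |
        ∀ p ∈ minors3Ideal, MvPolynomial.aeval x p = 0} = {a, b} := by
  have hM : M = (Matrix.of c).addDiagonal MvPolynomial.X := by
    ext i j
    simp [M, Matrix.addDiagonal, Matrix.diagonal_apply, MvPolynomial.algebraMap_eq]
  have hI : minors3Ideal = RankTwoLocus.rankLeTwoIdeal (Matrix.of c) := by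
    rw [minors3Ideal, hM]; rfl
  rw [hI]
  exact RankTwoLocus.isRadical_rankLeTwoIdeal_and_zeroLocus_eq_pair
    RankTwoLocus.nondegeneracy_c_ne_zero
end
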